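/- arXiv:1608.01928 — 7 statements merged into one kernel-verified Lean document; each statement's English description precedes it below -/
import Mathlib

section
/- Let V be a complex Hilbert space and M a set of continuous ℂ-linear operators on V closed under adjoints. Suppose that every continuous normal operator on V (a continuous operator commuting with its adjoint) that commutes with every element of M is a complex scalar multiple of the identity. Then (M,V) is topologically irreducible: every closed subspace of V invariant under every element of M equals {0} or V. -/
/-! The orthogonal projection onto a closed invariant subspace `W` is self-adjoint, hence normal,
and it commutes with every `m ∈ M`: `m` preserves `W`, and `m` preserves `Wᗮ` because `m†`
preserves `W`. So the projection is a scalar `c • id`; its range `W` is then `⊥` or `⊤`. -/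

open ContinuousLinearMap Module End

section

variable {𝕜 E : Type*} [RCLike 𝕜] [NormedAddCommGroup E] [InnerProductSpace 𝕜 E]

theorem commute_starProjection_of_mem_invtSubmodule [CompleteSpace E] {T : E →L[𝕜] E}
    {U : Submodule 𝕜 E} [U.HasOrthogonalProjection] (hT : U ∈ invtSubmodule T.toLinearMap)
    (hT' : U ∈ invtSubmodule T.adjoint.toLinearMap) : Commute U.starProjection T := by
  have hproj := U.isIdempotentElem_starProjection.toLinearMap
  have hcommLinear : Commute (U.starProjection : E →ₗ[𝕜] E) T := by
    rw [LinearMap.IsIdempotentElem.commute_iff hproj, U.range_starProjection,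
      U.ker_starProjection]
    exact ⟨hT, orthogonal_mem_invtSubmodule hT'⟩
  exact coe_injective hcommLinear.eq

theorem Submodule.eq_bot_or_eq_top_of_starProjection_eq_smul_id {U : Submodule 𝕜 E}
    [U.HasOrthogonalProjection] {c : 𝕜}
    (hc : U.starProjection = c • ContinuousLinearMap.id 𝕜 E) : U = ⊥ ∨ U = ⊤ := by
  rw [← U.range_starProjection, hc]
  rcases eq_or_ne c 0 with rfl | hc0
  · simp
  · right
    exact LinearMap.range_eq_top.mpr fun x => ⟨c⁻¹ • x, by simp [smul_smul, hc0]⟩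

end

/-- A Schur normal system on a complex Hilbert space is topologically
irreducible: if `M` is closed under adjoints and every continuous normal operator
commuting with every element of `M` is a complex scalar multiple of the identity,
then every closed invariant subspace is `⊥` or `⊤`. -/
theorem schur_normal_system_irreducible
    {V : Type*} [NormedAddCommGroup V] [InnerProductSpace ℂ V] [CompleteSpace V]
    (M : Set (V →L[ℂ] V)) (hM : ∀ m ∈ M, ContinuousLinearMap.adjoint m ∈ M)
    (hSchur : ∀ N : V →L[ℂ] V,
      N ∘L ContinuousLinearMap.adjoint N = ContinuousLinearMap.adjoint N ∘L N →
      (∀ m ∈ M, N ∘L m = m ∘L N) →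
      ∃ c : ℂ, N = c • ContinuousLinearMap.id ℂ V)
    (W : Submodule ℂ V) (hWclosed : IsClosed (W : Set V))
    (hWinv : ∀ m ∈ M, ∀ w ∈ W, m w ∈ W) :
    W = ⊥ ∨ W = ⊤ := by
  have : CompleteSpace W := hWclosed.completeSpace_coe
  have hinv : ∀ m ∈ M, W ∈ invtSubmodule (m : V →ₗ[ℂ] V) := fun m hm =>
    (mem_invtSubmodule_iff_forall_mem_of_mem _).mpr (hWinv m hm)
  have hnormal : W.starProjection ∘L adjoint W.starProjection =
      adjoint W.starProjection ∘L W.starProjection := by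
    rw [(isSelfAdjoint_starProjection W).adjoint_eq]
  have hcomm : ∀ m ∈ M, W.starProjection ∘L m = m ∘L W.starProjection := fun m hm =>
    (commute_starProjection_of_mem_invtSubmodule (hinv m hm) (hinv _ (hM m hm))).eq
  obtain ⟨c, hc⟩ := hSchur _ hnormal hcomm
  exact W.eq_bot_or_eq_top_of_starProjection_eq_smul_id hc
end

section
/- Let V be a complex Hilbert space and M a set of continuous ℂ-linear operators on V closed under adjoints, such that (M,V) is a Schur system. Suppose θ is a conjugate-linear isometric involution of V commuting with every element of M, and let W = {v ∈ V : θ(v) = v}, which is a closed ℝ-linear subspace of V, a real Hilbert space under Re⟪·,·⟫, invariant under every m ∈ M. Then every continuous ℝ-linear operator T : W → W that commutes with its (real) adjoint and with the restriction to W of every element of M is a real scalar multiple of the identity: the space of normal operators of an R-real Schur system is isomorphic to ℝ. -/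
/-! Since `v = ½ (v + θ v) + I • ½ (-I • v + θ (-I • v))`, the real subspace `W` spans `V` over
`ℂ`, so a `ℂ`-linear operator on `V` is determined by its values on `W`. Every real operator `S`
on `W` extends to one, namely the `ℂ`-linear part of `v ↦ S (v + θ v)`. As inner products of
vectors of `W` are real, the extensions of `T` and of its real adjoint are adjoint to each other,
and the extension of `T` is normal and commutes with `M` because these identities hold on `W`.
Hence it is a scalar `c`, and `c` is real because `T` preserves the fixed points of `θ`. -/

open Complex (I)
open ComplexConjugate

theorem Complex.smul_eq_re_smul_add_im_smul_I_smul {E : Type*} [AddCommGroup E] [Module ℂ E]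
    (z : ℂ) (x : E) : z • x = z.re • x + z.im • I • x := by
  conv_lhs => rw [← Complex.re_add_im z]
  rw [add_smul, mul_smul, Complex.coe_smul, Complex.coe_smul]

theorem LinearMap.map_complex_smul_of_map_I_smul {E F : Type*} [AddCommGroup E] [Module ℂ E]
    [AddCommGroup F] [Module ℂ F] (f : E →ₗ[ℝ] F) (hf : ∀ x, f (I • x) = I • f x) (z : ℂ) (x : E) :
    f (z • x) = z • f x := by
  rw [Complex.smul_eq_re_smul_add_im_smul_I_smul, map_add, map_smul, map_smul, hf,
    ← Complex.smul_eq_re_smul_add_im_smul_I_smul]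

namespace ContinuousLinearMap

variable {E F : Type*} [NormedAddCommGroup E] [NormedSpace ℂ E] [NormedAddCommGroup F]
  [NormedSpace ℂ F]

noncomputable def complexLinearPart (f : E →L[ℝ] F) : E →L[ℂ] F :=
  let g : E →L[ℝ] F := (2⁻¹ : ℂ) • (f - I • f.comp (I • ContinuousLinearMap.id ℝ E))
  { g.toLinearMap with
    map_smul' := g.toLinearMap.map_complex_smul_of_map_I_smul fun x => by
      simp only [g, coe_coe, smul_apply, sub_apply, comp_apply, id_apply, smul_smul,
        Complex.I_mul_I, neg_one_smul, map_neg]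
      rw [smul_neg, sub_neg_eq_add, mul_comm, mul_smul, smul_sub, smul_smul I I,
        Complex.I_mul_I, neg_one_smul, sub_neg_eq_add, add_comm]
    cont := g.continuous }

theorem complexLinearPart_apply (f : E →L[ℝ] F) (x : E) :
    f.complexLinearPart x = (2⁻¹ : ℂ) • (f x - I • f (I • x)) := rfl

end ContinuousLinearMap

namespace ConjugationFixedSubspace

variable {V : Type*} [NormedAddCommGroup V] [InnerProductSpace ℂ V] {θ : V →ₗ⋆[ℂ] V}
  {W : Submodule ℝ V}

theorem self_add_apply_mem (hθ : ∀ x, θ (θ x) = x) (hW : ∀ v, v ∈ W ↔ θ v = v) (v : V) :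
    v + θ v ∈ W := by
  rw [hW, map_add, hθ, add_comm]

theorem span_eq_top (hθ : ∀ x, θ (θ x) = x) (hW : ∀ v, v ∈ W ↔ θ v = v) :
    Submodule.span ℂ (W : Set V) = ⊤ := by
  refine Submodule.eq_top_iff'.2 fun v => ?_
  have hv : v = (2⁻¹ : ℂ) • (v + θ v) + I • (2⁻¹ : ℂ) • (-I • v + θ (-I • v)) := by
    rw [map_smulₛₗ, map_neg, Complex.conj_I, neg_neg]
    match_scalars <;> ring_nf <;> simp only [Complex.I_sq] <;> ring
  rw [hv]
  exact add_mem (Submodule.smul_mem _ _ (Submodule.subset_span (self_add_apply_mem hθ hW v)))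
    (Submodule.smul_mem _ _ (Submodule.smul_mem _ _
      (Submodule.subset_span (self_add_apply_mem hθ hW _))))

theorem ext_on {E : Type*} [AddCommGroup E] [Module ℂ E] [TopologicalSpace E]
    (hθ : ∀ x, θ (θ x) = x) (hW : ∀ v, v ∈ W ↔ θ v = v) {f g : V →L[ℂ] E}
    (h : ∀ w : W, f w = g w) : f = g :=
  ContinuousLinearMap.coe_injective <| LinearMap.ext_on (span_eq_top hθ hW) fun w hw => h ⟨w, hw⟩

theorem im_inner_eq_zero (hnorm : ∀ x, ‖θ x‖ = ‖x‖) (hW : ∀ v, v ∈ W ↔ θ v = v) (x y : W) :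
    (inner ℂ (x : V) y).im = 0 := by
  have h : ‖(x : V) + I • (y : V)‖ = ‖(x : V) - I • (y : V)‖ := by
    rw [← hnorm, map_add, map_smulₛₗ, (hW x).1 x.2, (hW y).1 y.2, Complex.conj_I, neg_smul,
      sub_eq_add_neg]
  have := im_inner_eq_norm_sub_i_smul_mul_self_sub_norm_add_i_smul_mul_self_div_four (𝕜 := ℂ)
    (x : V) (y : V)
  simp only [RCLike.im_to_complex, RCLike.I_to_complex] at this
  rw [this, h, sub_self, zero_div]

theorem smul_eq_re_smul (hW : ∀ v, v ∈ W ↔ θ v = v) {c : ℂ} {w : V} (hw : w ∈ W)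
    (hcw : c • w ∈ W) : c • w = c.re • w := by
  have hconj : conj c • w = c • w := by
    have h := (hW _).1 hcw
    rwa [map_smulₛₗ, (hW w).1 hw] at h
  rw [← Complex.coe_smul, Complex.re_eq_add_conj, div_eq_inv_mul, mul_smul, add_smul, hconj]
  module

theorem exists_extension (hθ : ∀ x, θ (θ x) = x) (hnorm : ∀ x, ‖θ x‖ = ‖x‖)
    (hW : ∀ v, v ∈ W ↔ θ v = v) (S : W →L[ℝ] W) : ∃ N : V →L[ℂ] V, ∀ w : W, N w = S w := by
  let θℝ : V →L[ℝ] V :=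
    θ.toAddMonoidHom.toRealLinearMap (AddMonoidHomClass.isometry_of_norm θ hnorm).continuous
  let P : V →L[ℝ] W := (1 + θℝ).codRestrict W (self_add_apply_mem hθ hW)
  refine ⟨(W.subtypeL.comp (S.comp P)).complexLinearPart, fun w => ?_⟩
  have hP (v : V) : (P v : V) = v + θ v := rfl
  have hPw : P w = (2 : ℝ) • w := by
    ext
    rw [hP, (hW w).1 w.2, Submodule.coe_smul, two_smul]
  have hPIw : P (I • (w : V)) = 0 := by
    ext
    rw [hP, map_smulₛₗ, (hW w).1 w.2, Complex.conj_I, neg_smul, add_neg_cancel]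
    rfl
  simp only [ContinuousLinearMap.complexLinearPart_apply, ContinuousLinearMap.comp_apply, hPw,
    hPIw, map_smul, map_zero, Submodule.coe_subtypeL, Submodule.subtype_apply,
    smul_zero, sub_zero]
  module

theorem adjoint_eq_of_extension [CompleteSpace V] (hθ : ∀ x, θ (θ x) = x)
    (hnorm : ∀ x, ‖θ x‖ = ‖x‖) (hW : ∀ v, v ∈ W ↔ θ v = v) {S S' : W →L[ℝ] W}
    (hSS' : ∀ x y : W, (inner ℂ (S' x : V) y).re = (inner ℂ (x : V) (S y : V)).re)
    {N N' : V →L[ℂ] V} (hN : ∀ w : W, N w = S w) (hN' : ∀ w : W, N' w = S' w) :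
    ContinuousLinearMap.adjoint N = N' := by
  refine ext_on hθ hW fun x => ext_inner_right ℂ fun v => ?_
  have h : (innerSL ℂ (x : V)).comp N = innerSL ℂ (N' x) :=
    ext_on hθ hW fun y => Complex.ext (by simp [hN, hN', hSS']) (by
      simp [hN, hN', im_inner_eq_zero hnorm hW])
  simpa [ContinuousLinearMap.adjoint_inner_left] using DFunLike.congr_fun h v

end ConjugationFixedSubspace

open ConjugationFixedSubspace

theorem rreal_schur_normal_operators_real_general
    {V : Type*} [NormedAddCommGroup V] [InnerProductSpace ℂ V] [CompleteSpace V]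
    (M : Set (V →L[ℂ] V))
    (hSchur : ∀ N : V →L[ℂ] V,
      N ∘L ContinuousLinearMap.adjoint N = ContinuousLinearMap.adjoint N ∘L N →
      (∀ m ∈ M, N ∘L m = m ∘L N) →
      ∃ c : ℂ, N = c • ContinuousLinearMap.id ℂ V)
    (θ : V → V)
    (hadd : ∀ x y, θ (x + y) = θ x + θ y)
    (hsmul : ∀ (a : ℂ) (x : V), θ (a • x) = (starRingEnd ℂ a) • θ x)
    (hnorm : ∀ x, ‖θ x‖ = ‖x‖)
    (hinvol : ∀ x, θ (θ x) = x)
    (W : Submodule ℝ V) (hWdef : ∀ v : V, v ∈ W ↔ θ v = v)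
    (hWinv : ∀ m ∈ M, ∀ v : V, v ∈ W → m v ∈ W)
    (T Tadj : W →L[ℝ] W)
    (hTadj : ∀ x y : W,
      (inner ℂ ((Tadj x : V)) (y : V) : ℂ).re = (inner ℂ (x : V) ((T y : V)) : ℂ).re)
    (hTnormal : T ∘L Tadj = Tadj ∘L T)
    (hTcomm : ∀ m, ∀ hm : m ∈ M, ∀ w : W,
      (T ⟨m (w : V), hWinv m hm w w.2⟩ : V) = m (T w : V)) :
    ∃ c : ℝ, ∀ w : W, T w = c • w := by
  let Θ : V →ₗ⋆[ℂ] V := ⟨⟨θ, hadd⟩, hsmul⟩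
  have hΘ : ∀ x, Θ (Θ x) = x := hinvol
  have hΘnorm : ∀ x, ‖Θ x‖ = ‖x‖ := hnorm
  have hW : ∀ v, v ∈ W ↔ Θ v = v := hWdef
  obtain ⟨N, hN⟩ := exists_extension hΘ hΘnorm hW T
  obtain ⟨N', hN'⟩ := exists_extension hΘ hΘnorm hW Tadj
  have hadj : ContinuousLinearMap.adjoint N = N' :=
    adjoint_eq_of_extension hΘ hΘnorm hW hTadj hN hN'
  have hnormal : N ∘L ContinuousLinearMap.adjoint N = ContinuousLinearMap.adjoint N ∘L N := by
    refine hadj ▸ ext_on hΘ hW fun w => ?_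
    simp only [ContinuousLinearMap.comp_apply, hN, hN']
    exact congr_arg Subtype.val (DFunLike.congr_fun hTnormal w)
  have hcommM (m : V →L[ℂ] V) (hm : m ∈ M) : N ∘L m = m ∘L N :=
    ext_on hΘ hW fun w => by
      simp only [ContinuousLinearMap.comp_apply, hN]
      exact (hN ⟨m w, hWinv m hm w w.2⟩).trans (hTcomm m hm w)
  obtain ⟨c, hc⟩ := hSchur N hnormal hcommM
  have hTw (w : W) : (T w : V) = c • (w : V) := by simp [← hN, hc]
  refine ⟨c.re, fun w => Subtype.ext ?_⟩
  rw [hTw, smul_eq_re_smul hW w.2 (hTw w ▸ (T w).2)]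
  rfl

/-- For an R-real Schur system, the space of normal operators is isomorphic
to `ℝ`: if `(M,V)` is a Schur system on a complex Hilbert space, `θ` is a conjugate-linear
isometric involution commuting with every element of `M`, and `W = {v : θ v = v}` is the
associated closed real subspace (a real Hilbert space under `Re⟪·,·⟫`, invariant under
`M`), then every continuous `ℝ`-linear operator `T : W → W` commuting with its real
adjoint and with the restriction to `W` of every element of `M` is a real scalar multiple
of the identity. -/
theorem rreal_schur_normal_operators_real
    {V : Type*} [NormedAddCommGroup V] [InnerProductSpace ℂ V] [CompleteSpace V]
    (M : Set (V →L[ℂ] V)) (hM : ∀ m ∈ M, ContinuousLinearMap.adjoint m ∈ M)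
    (hSchur : ∀ N : V →L[ℂ] V,
      N ∘L ContinuousLinearMap.adjoint N = ContinuousLinearMap.adjoint N ∘L N →
      (∀ m ∈ M, N ∘L m = m ∘L N) →
      ∃ c : ℂ, N = c • ContinuousLinearMap.id ℂ V)
    (θ : V → V)
    (hadd : ∀ x y, θ (x + y) = θ x + θ y)
    (hsmul : ∀ (a : ℂ) (x : V), θ (a • x) = (starRingEnd ℂ a) • θ x)
    (hnorm : ∀ x, ‖θ x‖ = ‖x‖)
    (hinvol : ∀ x, θ (θ x) = x)
    (hcomm : ∀ m ∈ M, ∀ x, θ (m x) = m (θ x))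
    (W : Submodule ℝ V) (hWdef : ∀ v : V, v ∈ W ↔ θ v = v)
    (hWclosed : IsClosed (W : Set V))
    (hWinv : ∀ m ∈ M, ∀ v : V, v ∈ W → m v ∈ W)
    (T Tadj : W →L[ℝ] W)
    (hTadj : ∀ x y : W,
      (inner ℂ ((Tadj x : V)) (y : V) : ℂ).re = (inner ℂ (x : V) ((T y : V)) : ℂ).re)
    (hTnormal : T ∘L Tadj = Tadj ∘L T)
    (hTcomm : ∀ m, ∀ hm : m ∈ M, ∀ w : W,
      (T ⟨m (w : V), hWinv m hm w w.2⟩ : V) = m (T w : V)) :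
    ∃ c : ℝ, ∀ w : W, T w = c • w :=
  rreal_schur_normal_operators_real_general M hSchur θ hadd hsmul hnorm hinvol W hWdef hWinv T Tadj
    hTadj hTnormal hTcomm
end

section
/- Let V be a complex Hilbert space and M a set of continuous ℂ-linear operators on V closed under adjoints, such that (M,V) is a Schur system. Assume there exists a surjective conjugate-linear isometry of V commuting with every element of M, but no conjugate-linear isometric involution of V commuting with every element of M (the system is C-pseudoreal). Then the real algebra of all continuous ℝ-linear operators on the realification of V commuting with every element of M is isomorphic, as an ℝ-algebra, to the quaternions ℍ. -/
/-!
By Schur's lemma (which, `M` being closed under adjoints, applies to every operator commuting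
with `M`, not only to normal ones) the complex-linear part of the commutant is `ℂ = ℝ ⊕ ℝ I`.
An anti-unitary `Θ` commuting with `M` has `Θ² = c` with `c` real of modulus one; `c = 1` is
excluded by C-pseudoreality, so `Θ² = -1`, and `I`, `Θ` anticommute. Every real-linear `T` in
the commutant splits into a part commuting with `I` and a part anticommuting with it, the latter
becoming complex-linear after composing with `Θ`; hence `T ∈ ℝ ⊕ ℝ I ⊕ ℝ Θ ⊕ ℝ IΘ ≅ ℍ`.
-/

open Complex ComplexConjugate ContinuousLinearMap

noncomputable section

namespace QuaternionAlgebra.Basis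

variable {R A : Type*} [Ring A]

section CommRing

variable [CommRing R] [Algebra R A] {c₁ c₃ : R}

def ofAnticommute (i j : A) (hi : i * i = c₁ • 1) (hj : j * j = c₃ • 1)
    (hij : j * i = -(i * j)) : Basis A c₁ 0 c₃ where
  i := i
  j := j
  k := i * j
  i_mul_i := by rw [hi, zero_smul, add_zero]
  j_mul_j := hj
  i_mul_j := rfl
  j_mul_i := by rw [hij, zero_smul, zero_sub]

end CommRing

theorem liftHom_surjective [Field R] [Algebra R A] {c₁ c₃ : R} (q : Basis A c₁ 0 c₃)
    (hc₁ : c₁ ≠ 0) (hc₃ : c₃ ≠ 0) (h2 : (2 : R) ≠ 0)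
    (hcent : ∀ a : A, Commute a q.i → ∃ r s : R, a = algebraMap R A r + s • q.i) :
    Function.Surjective q.liftHom := by
  have hii : q.i * q.i = c₁ • 1 := by simp
  have hji : q.j * q.i = -(q.i * q.j) := by simp
  intro a
  -- `p` is the part of `a` commuting with `i`, and `a - p` the part anticommuting with it
  set p := (2 : R)⁻¹ • (a + c₁⁻¹ • (q.i * a * q.i)) with hp
  have hpi : p * q.i = (2 : R)⁻¹ • (a * q.i + q.i * a) := by
    simp only [hp, add_mul, smul_mul_assoc, mul_assoc, hii, mul_smul_comm, mul_one, smul_smul,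
      inv_mul_cancel₀ hc₁, one_smul]
  have hip : q.i * p = (2 : R)⁻¹ • (a * q.i + q.i * a) := by
    simp only [hp, mul_add, mul_smul_comm, ← mul_assoc, hii, smul_mul_assoc, one_mul, smul_smul,
      inv_mul_cancel₀ hc₁, one_smul, add_comm]
  have hq_anti : (a - p) * q.i = -(q.i * (a - p)) := by
    have h : (2 : R)⁻¹ + 2⁻¹ = 1 := by field_simp; norm_num
    rw [sub_mul, mul_sub, hpi, hip]
    linear_combination (norm := module) (-h) • (a * q.i + q.i * a)
  have hqj_comm : Commute ((a - p) * q.j) q.i := by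
    simp only [Commute, SemiconjBy, mul_assoc, hji]
    rw [mul_neg, ← mul_assoc, hq_anti, neg_mul, neg_neg, mul_assoc]
  obtain ⟨r, s, hrs⟩ := hcent p (hpi.trans hip.symm)
  obtain ⟨t, u, htu⟩ := hcent _ hqj_comm
  have hq : a - p = c₃⁻¹ • ((a - p) * q.j * q.j) := by
    rw [mul_assoc, q.j_mul_j, mul_smul_comm, mul_one, smul_smul, inv_mul_cancel₀ hc₃, one_smul]
  refine ⟨⟨r, s, c₃⁻¹ * t, c₃⁻¹ * u⟩, ?_⟩
  rw [← sub_add_cancel a p, hq, htu, hrs]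
  simp only [liftHom_apply, lift, ← q.i_mul_j, add_mul, smul_mul_assoc,
    Algebra.algebraMap_eq_smul_one, one_mul, mul_smul]
  module

end QuaternionAlgebra.Basis

section ComplexStructure

variable {V W : Type*} [NormedAddCommGroup V] [NormedSpace ℂ V]
  [NormedAddCommGroup W] [NormedSpace ℂ W]

theorem Complex.smul_eq_re_smul_add_im_smul (a : ℂ) (x : V) :
    a • x = a.re • x + a.im • I • x := by
  conv_lhs => rw [← re_add_im a]
  rw [add_smul, mul_smul, coe_smul, coe_smul]

def ContinuousLinearMap.ofMapISmul (T : V →L[ℝ] W) (hT : ∀ x, T (I • x) = I • T x) :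
    V →L[ℂ] W where
  toFun := T
  map_add' := map_add T
  map_smul' a x := by
    rw [RingHom.id_apply, smul_eq_re_smul_add_im_smul a x, map_add, map_smul, map_smul, hT,
      smul_eq_re_smul_add_im_smul a (T x)]
  cont := T.cont

@[simp]
theorem ContinuousLinearMap.ofMapISmul_apply (T : V →L[ℝ] W) (hT : ∀ x, T (I • x) = I • T x)
    (x : V) : T.ofMapISmul hT x = T x := rfl

def LinearIsometry.toRealCLM (Θ : V →ₗᵢ⋆[ℂ] W) : V →L[ℝ] W :=
  Θ.toLinearMap.toAddMonoidHom.toRealLinearMap Θ.continuous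

@[simp]
theorem LinearIsometry.toRealCLM_apply (Θ : V →ₗᵢ⋆[ℂ] W) (x : V) : Θ.toRealCLM x = Θ x := rfl

theorem ContinuousLinearMap.I_smul_one_mul_self :
    (I • 1 : V →L[ℝ] V) * (I • 1) = (-1 : ℝ) • 1 := by
  ext x
  simp [smul_smul]

theorem LinearIsometry.toRealCLM_mul_I_smul_one (Θ : V →ₗᵢ⋆[ℂ] V) :
    Θ.toRealCLM * (I • 1) = -((I • 1) * Θ.toRealCLM) := by
  ext x
  simp [map_smulₛₗ, neg_smul]

end ComplexStructure

section Schur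

variable {V : Type*} [NormedAddCommGroup V] [InnerProductSpace ℂ V]

def realCommutant (M : Set (V →L[ℂ] V)) : Subalgebra ℝ (V →L[ℝ] V) :=
  Subalgebra.centralizer ℝ ((fun m : V →L[ℂ] V => m.restrictScalars ℝ) '' M)

def IsSchurSystem [CompleteSpace V] (M : Set (V →L[ℂ] V)) : Prop :=
  ∀ N : V →L[ℂ] V, N ∘L adjoint N = adjoint N ∘L N → (∀ m ∈ M, N ∘L m = m ∘L N) →
    ∃ c : ℂ, N = c • ContinuousLinearMap.id ℂ V

variable {M : Set (V →L[ℂ] V)}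

theorem mem_realCommutant_iff {T : V →L[ℝ] V} :
    T ∈ realCommutant M ↔ ∀ m ∈ M, ∀ x, m (T x) = T (m x) := by
  simp only [realCommutant, Subalgebra.mem_centralizer_iff, Set.forall_mem_image,
    ContinuousLinearMap.ext_iff]
  rfl

theorem I_smul_one_mem_realCommutant : I • (1 : V →L[ℝ] V) ∈ realCommutant M :=
  mem_realCommutant_iff.mpr fun m _ x => by simp

def realCommutant.quaternionBasis (Θ : V →ₗᵢ⋆[ℂ] V)
    (hΘM : ∀ m ∈ M, ∀ x, Θ (m x) = m (Θ x)) (hΘ_sq : ∀ x, Θ (Θ x) = -x) :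
    QuaternionAlgebra.Basis (realCommutant M) (-1 : ℝ) 0 (-1) :=
  .ofAnticommute ⟨I • 1, I_smul_one_mem_realCommutant⟩
    ⟨Θ.toRealCLM, mem_realCommutant_iff.mpr fun m hm x => by simp [hΘM m hm]⟩
    (Subtype.ext I_smul_one_mul_self)
    (Subtype.ext <| ContinuousLinearMap.ext fun x => by simp [hΘ_sq])
    (Subtype.ext Θ.toRealCLM_mul_I_smul_one)

variable [CompleteSpace V]

namespace IsSchurSystem

variable (hS : IsSchurSystem M) (hM : ∀ m ∈ M, adjoint m ∈ M)
include hS hM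

theorem exists_eq_smul_id (N : V →L[ℂ] V) (hN : ∀ m ∈ M, N ∘L m = m ∘L N) :
    ∃ c : ℂ, N = c • ContinuousLinearMap.id ℂ V := by
  have hN' : ∀ m ∈ M, adjoint N ∘L m = m ∘L adjoint N := fun m hm => by
    simpa only [adjoint_comp, adjoint_adjoint] using (congrArg adjoint (hN _ (hM m hm))).symm
  -- `N = (S - I • D) / 2` with `S = N + N†` and `D = I • (N - N†)` self-adjoint
  have h_selfAdjoint : ∀ S : V →L[ℂ] V, adjoint S = S → (∀ m ∈ M, S ∘L m = m ∘L S) →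
      ∃ c : ℂ, S = c • ContinuousLinearMap.id ℂ V := fun S hS' hSM => hS S (by rw [hS']) hSM
  obtain ⟨a, ha⟩ := h_selfAdjoint (N + adjoint N)
    (by rw [map_add, adjoint_adjoint, add_comm])
    (fun m hm => by rw [add_comp, comp_add, hN m hm, hN' m hm])
  obtain ⟨b, hb⟩ := h_selfAdjoint (I • (N - adjoint N))
    (by rw [map_smulₛₗ, map_sub, adjoint_adjoint, conj_I, neg_smul, ← smul_neg, neg_sub])
    (fun m hm => by rw [smul_comp, comp_smul, sub_comp, comp_sub, hN m hm, hN' m hm])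
  refine ⟨(a - I * b) / 2, ?_⟩
  have hI : I • I • (N - adjoint N) = -(N - adjoint N) := by rw [smul_smul, I_mul_I, neg_one_smul]
  linear_combination (norm := module) (2 : ℂ)⁻¹ • (ha - I • hb + hI)

theorem exists_eq_complex_smul {T : V →L[ℝ] V} (hTM : T ∈ realCommutant M)
    (hTI : Commute T (I • 1)) : ∃ c : ℂ, ∀ x, T x = c • x := by
  have hTI' : ∀ x, T (I • x) = I • T x := fun x => by
    simpa using (ContinuousLinearMap.ext_iff.mp hTI x)
  obtain ⟨c, hc⟩ := hS.exists_eq_smul_id hM (T.ofMapISmul hTI') fun m hm => by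
    ext x
    exact (mem_realCommutant_iff.mp hTM m hm x).symm
  exact ⟨c, fun x => by simpa using ContinuousLinearMap.ext_iff.mp hc x⟩

theorem eq_algebraMap_add_smul_of_commute {T : V →L[ℝ] V} (hTM : T ∈ realCommutant M)
    (hTI : Commute T (I • 1)) : ∃ r s : ℝ, T = algebraMap ℝ _ r + s • I • 1 := by
  obtain ⟨c, hc⟩ := hS.exists_eq_complex_smul hM hTM hTI
  refine ⟨c.re, c.im, ContinuousLinearMap.ext fun x => ?_⟩
  simp [hc, smul_eq_re_smul_add_im_smul c x]

theorem apply_apply_eq_neg_of_not_involutive (Θ : V →ₗᵢ⋆[ℂ] V)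
    (hΘM : ∀ m ∈ M, ∀ x, Θ (m x) = m (Θ x)) (hΘ : ¬ Function.Involutive Θ) (x : V) :
    Θ (Θ x) = -x := by
  obtain ⟨c, hc⟩ := hS.exists_eq_smul_id hM
    (Θ.toContinuousLinearMap.comp Θ.toContinuousLinearMap) fun m hm => by
      ext y
      simp [hΘM m hm]
  have hΘΘ : ∀ y, Θ (Θ y) = c • y := fun y => by simpa using ContinuousLinearMap.ext_iff.mp hc y
  obtain ⟨x₀, hx₀⟩ := not_forall.mp hΘ
  have hx₀_ne : x₀ ≠ 0 := by rintro rfl; simp at hx₀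
  have hc_norm : ‖c‖ = 1 := by
    have h := (Θ.norm_map (Θ x₀)).trans (Θ.norm_map x₀)
    rwa [hΘΘ, norm_smul, mul_eq_right₀ (norm_ne_zero_iff.mpr hx₀_ne)] at h
  -- `c • Θ x₀ = Θ (Θ (Θ x₀)) = Θ (c • x₀) = conj c • Θ x₀`
  have hc_conj : conj c = c := by
    have h := map_smulₛₗ Θ c x₀
    rw [← hΘΘ, hΘΘ] at h
    exact (smul_left_injective ℂ (by rwa [← norm_ne_zero_iff, Θ.norm_map, norm_ne_zero_iff]) h).symm
  have hc_sq : c * c = 1 := by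
    simpa [hc_conj, hc_norm] using mul_conj' c
  rcases mul_self_eq_one_iff.mp hc_sq with rfl | rfl
  · exact absurd (by simpa using hΘΘ x₀) hx₀
  · simpa using hΘΘ x

theorem quaternionBasis_liftHom_surjective (Θ : V →ₗᵢ⋆[ℂ] V)
    (hΘM : ∀ m ∈ M, ∀ x, Θ (m x) = m (Θ x)) (hΘ_sq : ∀ x, Θ (Θ x) = -x) :
    Function.Surjective (realCommutant.quaternionBasis Θ hΘM hΘ_sq).liftHom := by
  refine (realCommutant.quaternionBasis Θ hΘM hΘ_sq).liftHom_surjective (by norm_num)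
    (by norm_num) (by norm_num) fun T hT => ?_
  obtain ⟨r, s, h⟩ := hS.eq_algebraMap_add_smul_of_commute hM T.2 (congrArg Subtype.val hT)
  exact ⟨r, s, Subtype.ext h⟩

end IsSchurSystem

end Schur

/-- For a C-pseudoreal Schur system `(M,V)` (an anti-unitary operator
commuting with `M` exists, but no conjugate-linear isometric involution does), the real
algebra of all continuous `ℝ`-linear operators on the realification of `V` commuting with
every element of `M` is isomorphic, as an `ℝ`-algebra, to the quaternions `ℍ`. -/
theorem cpseudoreal_schur_commutant_quaternionic
    {V : Type*} [NormedAddCommGroup V] [InnerProductSpace ℂ V] [CompleteSpace V]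
    (M : Set (V →L[ℂ] V)) (hM : ∀ m ∈ M, ContinuousLinearMap.adjoint m ∈ M)
    (hSchur : ∀ N : V →L[ℂ] V,
      N ∘L ContinuousLinearMap.adjoint N = ContinuousLinearMap.adjoint N ∘L N →
      (∀ m ∈ M, N ∘L m = m ∘L N) →
      ∃ c : ℂ, N = c • ContinuousLinearMap.id ℂ V)
    (hanti : ∃ θ : V → V, Function.Surjective θ ∧
      (∀ x y, θ (x + y) = θ x + θ y) ∧
      (∀ (a : ℂ) (x : V), θ (a • x) = (starRingEnd ℂ a) • θ x) ∧
      (∀ x, ‖θ x‖ = ‖x‖) ∧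
      (∀ m ∈ M, ∀ x, θ (m x) = m (θ x)))
    (hnoconj : ¬ ∃ θ : V → V, Function.Surjective θ ∧
      (∀ x y, θ (x + y) = θ x + θ y) ∧
      (∀ (a : ℂ) (x : V), θ (a • x) = (starRingEnd ℂ a) • θ x) ∧
      (∀ x, ‖θ x‖ = ‖x‖) ∧
      (∀ x, θ (θ x) = x) ∧
      (∀ m ∈ M, ∀ x, θ (m x) = m (θ x))) :
    Nonempty
      ((Subalgebra.centralizer ℝ
        ((fun m : V →L[ℂ] V => m.restrictScalars ℝ) '' M) : Subalgebra ℝ (V →L[ℝ] V))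
        ≃ₐ[ℝ] Quaternion ℝ) := by
  have hS : IsSchurSystem M := hSchur
  obtain ⟨θ, -, hadd, hsmul, hnorm, hθM⟩ := hanti
  have hθ : ¬ Function.Involutive θ := fun h =>
    hnoconj ⟨θ, h.surjective, hadd, hsmul, hnorm, h, hθM⟩
  have : Nontrivial V := not_subsingleton_iff_nontrivial.mp fun _ =>
    hθ fun _ => Subsingleton.elim _ _
  let Θ : V →ₗᵢ⋆[ℂ] V := ⟨⟨⟨θ, hadd⟩, hsmul⟩, hnorm⟩
  have hΘ_sq := hS.apply_apply_eq_neg_of_not_involutive hM Θ hθM hθ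
  let φ : Quaternion ℝ →ₐ[ℝ] realCommutant M :=
    (realCommutant.quaternionBasis Θ hθM hΘ_sq).liftHom
  exact ⟨(AlgEquiv.ofBijective φ ⟨RingHom.injective (φ : Quaternion ℝ →+* realCommutant M),
    hS.quaternionBasis_liftHom_surjective hM Θ hθM hΘ_sq⟩).symm⟩
end
end

section
/- Let A_μ (μ = 0,1,2,3) be unitary 4×4 complex matrices satisfying A_μ A_ν + A_ν A_μ = −2 η_{μν} I for all μ,ν. Suppose Θ and Θ' are conjugate-linear involutions of ℂ⁴ (additive maps with Θ(c·v) = c̄·Θ(v) for all c ∈ ℂ, v ∈ ℂ⁴, and Θ∘Θ = id) each of which commutes with multiplication by every A_μ (Θ(A_μ v) = A_μ Θ(v) for all v). Then there exists c ∈ ℂ with c·c̄ = 1 such that Θ'(v) = c·Θ(v) for all v ∈ ℂ⁴: the charge conjugation operator is unique up to a complex phase. -/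
/-!
Both `Θ` and `Θ'` are conjugate-linear, so `Θ' ∘ Θ` is `ℂ`-linear; it commutes with every `A μ`,
hence is a scalar `c`. Then `Θ' = c • Θ`, and `Θ' ∘ Θ' = id` forces `c c̄ = 1`.

That the commutant of the `A μ` consists of scalars is seen through traces. `C = A₁` and
`G = i A₂ A₃` are commuting involutions, so the `P s t = (1 + s C)(1 + t G) / 4`, `s, t = ±1`, are
idempotents summing to `1`. The traces of `C`, `G` and `C G` vanish, since each anticommutes with
the invertible `A₀` or `A₂`; so every `P s t` has trace `1`, i.e. rank `1`, and a map `M` commuting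
with it satisfies `M P s t = tr (M P s t) • P s t`. Conjugation by `A₀` and by `A₂` permutes the
`P s t` transitively and fixes `M`, so these four traces agree.
-/

open Matrix

noncomputable def minkowskiEta : Matrix (Fin 4) (Fin 4) ℝ :=
  Matrix.diagonal ![1, -1, -1, -1]

open Module

theorem LinearMap.trace_mul_eq_of_mul_eq_mul {R M : Type*} [CommRing R] [AddCommGroup M]
    [Module R M] {m e p q : Module.End R M} (he : IsUnit e) (hme : Commute m e)
    (hepq : e * p = q * e) : LinearMap.trace R M (m * q) = LinearMap.trace R M (m * p) := by
  obtain ⟨u, rfl⟩ := he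
  have hq : q = u * p * ↑u⁻¹ := by rw [hepq, mul_assoc, Units.mul_inv, mul_one]
  rw [hq, ← mul_assoc, ← mul_assoc, hme.eq, mul_assoc _ m p, LinearMap.trace_conj]

section Field

variable {K V : Type*} [Field K] [CharZero K] [AddCommGroup V] [Module K V]

theorem LinearMap.trace_eq_zero_of_mul_eq_neg_mul {a b : Module.End K V} (hb : IsUnit b)
    (h : b * a = -(a * b)) : LinearMap.trace K V a = 0 := by
  have := LinearMap.trace_mul_eq_of_mul_eq_mul hb (Commute.one_left b)
    (h.trans (neg_mul a b).symm)
  rwa [one_mul, one_mul, map_neg, CharZero.neg_eq_self_iff] at this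

theorem LinearMap.mul_eq_trace_mul_smul_of_trace_eq_one [FiniteDimensional K V]
    {p m : Module.End K V} (hp : IsIdempotentElem p) (htr : LinearMap.trace K V p = 1)
    (hm : Commute m p) : m * p = LinearMap.trace K V (m * p) • p := by
  have hrank : finrank K (LinearMap.range p) = 1 := by
    exact_mod_cast (IsIdempotentElem.isProj_range p hp).trace.symm.trans htr
  have hmaps : ∀ x ∈ LinearMap.range p, m x ∈ LinearMap.range p := by
    rintro _ ⟨y, rfl⟩
    exact ⟨m y, LinearMap.congr_fun hm.eq.symm y⟩
  obtain ⟨c, hc, -⟩ :=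
    LinearMap.existsUnique_eq_smul_id_of_finrank_eq_one hrank (m.restrict hmaps)
  have hmp : m * p = c • p := by
    ext1 x
    simpa using
      congrArg Subtype.val (LinearMap.congr_fun hc ⟨p x, LinearMap.mem_range_self p x⟩)
  rw [hmp, map_smul, htr, smul_eq_mul, mul_one]

end Field

theorem commute_mul_of_mul_eq_neg_mul {R : Type*} [Ring R] {x y z : R} (hy : x * y = -(y * x))
    (hz : x * z = -(z * x)) : Commute x (y * z) := by
  rw [Commute, SemiconjBy, ← mul_assoc, hy, neg_mul, mul_assoc, hz, mul_neg, neg_neg, mul_assoc]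

section JointEigenproj

variable {K A : Type*} [Field K] [Ring A] [Algebra K A]

def jointEigenproj (c g : A) (s t : K) : A := (4 : K)⁻¹ • ((1 + s • c) * (1 + t • g))

theorem mul_one_add_smul_of_mul_eq_smul_mul {e x : A} {σ : K} (h : e * x = σ • (x * e))
    (s : K) : e * (1 + s • x) = (1 + (σ * s) • x) * e := by
  rw [mul_add, mul_smul_comm, h, add_mul, smul_mul_assoc, smul_smul, mul_comm, mul_one, one_mul]

theorem one_add_smul_mul_self {x : A} (hx : x * x = 1) {r : K} (hr : r * r = 1) :
    (1 + r • x) * (1 + r • x) = (2 : K) • (1 + r • x) := by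
  simp only [add_mul, mul_add, one_mul, mul_one, smul_mul_smul_comm, hx, hr, one_smul]
  module

variable {c g : A}

theorem isIdempotentElem_jointEigenproj [CharZero K] (hc : c * c = 1) (hg : g * g = 1)
    (hcg : Commute c g) {s t : K} (hs : s * s = 1) (ht : t * t = 1) :
    IsIdempotentElem (jointEigenproj c g s t) := by
  have hcomm : Commute (1 + s • c) (1 + t • g) := (Commute.one_left _).add_left
    ((Commute.one_right _).add_right ((hcg.smul_left s).smul_right t))
  unfold IsIdempotentElem jointEigenproj
  rw [smul_mul_smul_comm, mul_assoc, ← mul_assoc (1 + t • g), ← hcomm.eq, mul_assoc,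
    one_add_smul_mul_self hg ht, ← mul_assoc, one_add_smul_mul_self hc hs, smul_mul_smul_comm,
    smul_smul]
  norm_num

theorem jointEigenproj_add_add_add [CharZero K] :
    jointEigenproj c g (1 : K) 1 + jointEigenproj c g (1 : K) (-1)
      + jointEigenproj c g (-1 : K) 1 + jointEigenproj c g (-1 : K) (-1) = 1 := by
  simp only [jointEigenproj, ← smul_add]
  rw [inv_smul_eq_iff₀ (by norm_num)]
  simp only [neg_smul, one_smul, ofNat_smul_eq_nsmul]
  noncomm_ring

theorem mul_jointEigenproj_of_mul_eq_smul_mul {e : A} {σ τ : K} (hec : e * c = σ • (c * e))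
    (heg : e * g = τ • (g * e)) (s t : K) :
    e * jointEigenproj c g s t = jointEigenproj c g (σ * s) (τ * t) * e := by
  rw [jointEigenproj, jointEigenproj, mul_smul_comm, ← mul_assoc,
    mul_one_add_smul_of_mul_eq_smul_mul hec, mul_assoc, mul_one_add_smul_of_mul_eq_smul_mul heg,
    ← mul_assoc, smul_mul_assoc]

theorem Commute.jointEigenproj {m : A} (hmc : Commute m c) (hmg : Commute m g) (s t : K) :
    Commute m (jointEigenproj c g s t) :=
  (((Commute.one_right m).add_right (hmc.smul_right s)).mul_right
    ((Commute.one_right m).add_right (hmg.smul_right t))).smul_right _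

end JointEigenproj

section Commutant

variable {K V : Type*} [Field K] [CharZero K] [AddCommGroup V] [Module K V] [FiniteDimensional K V]

theorem LinearMap.trace_jointEigenproj {c g : Module.End K V} (hc : LinearMap.trace K V c = 0)
    (hg : LinearMap.trace K V g = 0) (hcg : LinearMap.trace K V (c * g) = 0) (s t : K) :
    LinearMap.trace K V (jointEigenproj c g s t) = finrank K V / 4 := by
  simp only [jointEigenproj, map_smul, mul_add, add_mul, one_mul, mul_one, smul_mul_smul_comm,
    map_add, LinearMap.trace_one, hc, hg, hcg, smul_eq_mul]
  ring

theorem Module.End.exists_eq_smul_one_of_commute_of_anticommute (hV : finrank K V = 4)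
    {c g e f m : Module.End K V} (hc : c * c = 1) (hg : g * g = 1) (hcg : Commute c g)
    (he : IsUnit e) (hec : e * c = -(c * e)) (heg : Commute e g)
    (hf : IsUnit f) (hfc : f * c = -(c * f)) (hfg : f * g = -(g * f))
    (hmc : Commute m c) (hmg : Commute m g) (hme : Commute m e) (hmf : Commute m f) :
    ∃ a : K, m = a • 1 := by
  have hecg : e * (c * g) = -((c * g) * e) := by
    rw [← mul_assoc, hec, neg_mul, mul_assoc, heg.eq, ← mul_assoc]
  have htr (s t : K) : LinearMap.trace K V (jointEigenproj c g s t) = 1 := by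
    rw [LinearMap.trace_jointEigenproj (LinearMap.trace_eq_zero_of_mul_eq_neg_mul he hec)
      (LinearMap.trace_eq_zero_of_mul_eq_neg_mul hf hfg)
      (LinearMap.trace_eq_zero_of_mul_eq_neg_mul he hecg), hV]
    norm_num
  set a : K → K → K := fun s t => LinearMap.trace K V (m * jointEigenproj c g s t)
  have hmp {s t : K} (hs : s * s = 1) (ht : t * t = 1) :
      m * jointEigenproj c g s t = a s t • jointEigenproj c g s t :=
    LinearMap.mul_eq_trace_mul_smul_of_trace_eq_one
      (isIdempotentElem_jointEigenproj hc hg hcg hs ht) (htr s t) (hmc.jointEigenproj hmg s t)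
  have hae (s t : K) : a (-s) t = a s t := by
    have := mul_jointEigenproj_of_mul_eq_smul_mul (c := c) (g := g) (e := e) (σ := -1) (τ := 1)
      (by rwa [neg_one_smul]) (by rw [one_smul]; exact heg.eq) s t
    rw [neg_one_mul, one_mul] at this
    exact LinearMap.trace_mul_eq_of_mul_eq_mul he hme this
  have haf (s t : K) : a (-s) (-t) = a s t := by
    have := mul_jointEigenproj_of_mul_eq_smul_mul (c := c) (g := g) (e := f) (σ := -1) (τ := -1)
      (by rwa [neg_one_smul]) (by rwa [neg_one_smul]) s t
    rw [neg_one_mul, neg_one_mul] at this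
    exact LinearMap.trace_mul_eq_of_mul_eq_mul hf hmf this
  have h1 : (1 : K) * 1 = 1 := one_mul 1
  have h1' : (-1 : K) * -1 = 1 := by norm_num
  have ha₁ : a 1 (-1) = a 1 1 := by simpa using (hae (-1) (-1)).trans (haf 1 1)
  refine ⟨a 1 1, ?_⟩
  calc m = m * (jointEigenproj c g (1 : K) 1 + jointEigenproj c g (1 : K) (-1)
        + jointEigenproj c g (-1 : K) 1 + jointEigenproj c g (-1 : K) (-1)) := by
        rw [jointEigenproj_add_add_add, mul_one]
    _ = a 1 1 • (jointEigenproj c g (1 : K) 1 + jointEigenproj c g (1 : K) (-1)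
        + jointEigenproj c g (-1 : K) 1 + jointEigenproj c g (-1 : K) (-1)) := by
        rw [mul_add, mul_add, mul_add, hmp h1 h1, hmp h1 h1', hmp h1' h1, hmp h1' h1', hae, haf,
          ha₁, smul_add, smul_add, smul_add]
    _ = a 1 1 • 1 := by rw [jointEigenproj_add_add_add]

end Commutant

section Clifford

variable {A : Type*} [Ring A] [Algebra ℂ A] {γ : Fin 4 → A}

theorem mul_eq_neg_mul_of_clifford
    (hγ : ∀ μ ν, γ μ * γ ν + γ ν * γ μ = (-2 * (minkowskiEta μ ν : ℂ)) • (1 : A))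
    {μ ν : Fin 4} (h : μ ≠ ν) : γ μ * γ ν = -(γ ν * γ μ) := by
  have := hγ μ ν
  rw [minkowskiEta, Matrix.diagonal_apply_ne _ h] at this
  simpa [add_eq_zero_iff_eq_neg] using this

theorem mul_self_of_clifford
    (hγ : ∀ μ ν, γ μ * γ ν + γ ν * γ μ = (-2 * (minkowskiEta μ ν : ℂ)) • (1 : A)) (μ : Fin 4) :
    γ μ * γ μ = (-(minkowskiEta μ μ : ℂ)) • 1 := by
  have := hγ μ μ
  rw [← two_smul ℂ, show (-2 * (minkowskiEta μ μ : ℂ)) = 2 * -(minkowskiEta μ μ : ℂ) by ring,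
    ← smul_smul] at this
  exact smul_right_injective A two_ne_zero this

end Clifford

theorem Module.End.exists_eq_smul_one_of_commute_clifford {V : Type*} [AddCommGroup V]
    [Module ℂ V] [FiniteDimensional ℂ V] (hV : finrank ℂ V = 4) {γ : Fin 4 → Module.End ℂ V}
    (hγ : ∀ μ ν, γ μ * γ ν + γ ν * γ μ = (-2 * (minkowskiEta μ ν : ℂ)) • 1)
    {m : Module.End ℂ V} (hm : ∀ μ, Commute m (γ μ)) : ∃ a : ℂ, m = a • 1 := by
  have anti {μ ν : Fin 4} (h : μ ≠ ν) := mul_eq_neg_mul_of_clifford hγ h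
  have hsq := mul_self_of_clifford hγ
  have h0 : γ 0 * γ 0 = -1 := by simpa [minkowskiEta] using hsq 0
  have h1 : γ 1 * γ 1 = 1 := by simpa [minkowskiEta] using hsq 1
  have h2 : γ 2 * γ 2 = 1 := by simpa [minkowskiEta] using hsq 2
  have h3 : γ 3 * γ 3 = 1 := by simpa [minkowskiEta] using hsq 3
  have h232 : γ 2 * γ 3 * γ 2 = -γ 3 := by
    rw [mul_assoc, anti (by decide), mul_neg, ← mul_assoc, h2, one_mul]
  set g := Complex.I • (γ 2 * γ 3)
  have hg : g * g = 1 := by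
    rw [smul_mul_smul_comm, Complex.I_mul_I, ← mul_assoc, h232, neg_mul, h3, neg_smul, one_smul,
      neg_neg]
  have hcg : Commute (γ 1) g :=
    (commute_mul_of_mul_eq_neg_mul (anti (by decide)) (anti (by decide))).smul_right _
  have heg : Commute (γ 0) g :=
    (commute_mul_of_mul_eq_neg_mul (anti (by decide)) (anti (by decide))).smul_right _
  have hfg : γ 2 * g = -(g * γ 2) := by
    rw [mul_smul_comm, smul_mul_assoc, h232, ← mul_assoc, h2, one_mul, smul_neg, neg_neg]
  have he : IsUnit (γ 0) :=
    ⟨⟨γ 0, -γ 0, by rw [mul_neg, h0, neg_neg], by rw [neg_mul, h0, neg_neg]⟩, rfl⟩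
  have hf : IsUnit (γ 2) := ⟨⟨γ 2, γ 2, h2, h2⟩, rfl⟩
  exact exists_eq_smul_one_of_commute_of_anticommute hV h1 hg hcg he (anti (by decide)) heg hf
    (anti (by decide)) hfg (hm 1) (((hm 2).mul_right (hm 3)).smul_right _) (hm 0) (hm 2)

theorem mul_conj_eq_one_and_eq_smul_of_comp_eq_smul {K V : Type*} [Field K] [StarRing K]
    [AddCommGroup V] [Module K V] [Nontrivial V] (Θ Θ' : V → V)
    (hsmul' : ∀ (c : K) (v : V), Θ' (c • v) = (starRingEnd K c) • Θ' v)
    (hinvol : ∀ v, Θ (Θ v) = v) (hinvol' : ∀ v, Θ' (Θ' v) = v) {c : K}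
    (hc : ∀ v, Θ' (Θ v) = c • v) : c * starRingEnd K c = 1 ∧ ∀ v, Θ' v = c • Θ v := by
  have heq (v : V) : Θ' v = c • Θ v := by rw [← hc, hinvol]
  refine ⟨?_, heq⟩
  obtain ⟨v, hv⟩ := exists_ne (0 : V)
  have hv' : (starRingEnd K c * c) • v = (1 : K) • v := by
    rw [mul_smul, ← hc, ← hsmul', ← heq, hinvol', one_smul]
  rw [mul_comm]
  exact smul_left_injective K hv hv'

theorem charge_conjugation_unique_up_to_phase_general
    (A : Fin 4 → Matrix (Fin 4) (Fin 4) ℂ)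
    (hcliff : ∀ μ ν, A μ * A ν + A ν * A μ =
      (-2 * (minkowskiEta μ ν : ℂ)) • (1 : Matrix (Fin 4) (Fin 4) ℂ))
    (Θ Θ' : (Fin 4 → ℂ) → (Fin 4 → ℂ))
    (hadd : ∀ v w, Θ (v + w) = Θ v + Θ w)
    (hsmul : ∀ (c : ℂ) (v : Fin 4 → ℂ), Θ (c • v) = (starRingEnd ℂ c) • Θ v)
    (hinvol : ∀ v, Θ (Θ v) = v)
    (hcomm : ∀ μ v, Θ ((A μ).mulVec v) = (A μ).mulVec (Θ v))
    (hadd' : ∀ v w, Θ' (v + w) = Θ' v + Θ' w)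
    (hsmul' : ∀ (c : ℂ) (v : Fin 4 → ℂ), Θ' (c • v) = (starRingEnd ℂ c) • Θ' v)
    (hinvol' : ∀ v, Θ' (Θ' v) = v)
    (hcomm' : ∀ μ v, Θ' ((A μ).mulVec v) = (A μ).mulVec (Θ' v)) :
    ∃ c : ℂ, c * (starRingEnd ℂ c) = 1 ∧ ∀ v, Θ' v = c • Θ v := by
  let θ : (Fin 4 → ℂ) →ₗ⋆[ℂ] (Fin 4 → ℂ) := ⟨⟨Θ, hadd⟩, hsmul⟩
  let θ' : (Fin 4 → ℂ) →ₗ⋆[ℂ] (Fin 4 → ℂ) := ⟨⟨Θ', hadd'⟩, hsmul'⟩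
  obtain ⟨c, hc⟩ := Module.End.exists_eq_smul_one_of_commute_clifford (by simp)
    (γ := fun μ => Matrix.toLinAlgEquiv' (A μ))
    (fun μ ν => by
      simpa only [map_add, map_mul, map_smul, map_one] using
        congrArg Matrix.toLinAlgEquiv' (hcliff μ ν)) (m := θ'.comp θ)
    (fun μ => LinearMap.ext fun v => by simp [θ, θ', hcomm, hcomm'])
  exact ⟨c, mul_conj_eq_one_and_eq_smul_of_comp_eq_smul Θ Θ' hsmul' hinvol hinvol'
    (LinearMap.congr_fun hc)⟩

/-- The charge conjugation operator is unique up to a complex phase: if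
`A_μ` are unitary 4×4 complex Majorana matrices satisfying the Clifford relations and
`Θ`, `Θ'` are conjugate-linear involutions of `ℂ⁴` commuting with multiplication by every
`A_μ`, then `Θ' = c • Θ` for some `c : ℂ` with `c * c̄ = 1`. -/
theorem charge_conjugation_unique_up_to_phase
    (A : Fin 4 → Matrix (Fin 4) (Fin 4) ℂ)
    (hunitary : ∀ μ, (A μ)ᴴ * A μ = 1)
    (hcliff : ∀ μ ν, A μ * A ν + A ν * A μ =
      (-2 * (minkowskiEta μ ν : ℂ)) • (1 : Matrix (Fin 4) (Fin 4) ℂ))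
    (Θ Θ' : (Fin 4 → ℂ) → (Fin 4 → ℂ))
    (hadd : ∀ v w, Θ (v + w) = Θ v + Θ w)
    (hsmul : ∀ (c : ℂ) (v : Fin 4 → ℂ), Θ (c • v) = (starRingEnd ℂ c) • Θ v)
    (hinvol : ∀ v, Θ (Θ v) = v)
    (hcomm : ∀ μ v, Θ ((A μ).mulVec v) = (A μ).mulVec (Θ v))
    (hadd' : ∀ v w, Θ' (v + w) = Θ' v + Θ' w)
    (hsmul' : ∀ (c : ℂ) (v : Fin 4 → ℂ), Θ' (c • v) = (starRingEnd ℂ c) • Θ' v)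
    (hinvol' : ∀ v, Θ' (Θ' v) = v)
    (hcomm' : ∀ μ v, Θ' ((A μ).mulVec v) = (A μ).mulVec (Θ' v)) :
    ∃ c : ℂ, c * (starRingEnd ℂ c) = 1 ∧ ∀ v, Θ' v = c • Θ v :=
  charge_conjugation_unique_up_to_phase_general A hcliff Θ Θ' hadd hsmul hinvol hcomm hadd' hsmul'
    hinvol' hcomm'
end

section
/- Let B_μ (μ = 0,1,2,3) be 4×4 real matrices satisfying B_μ B_ν + B_ν B_μ = −2 η_{μν} I for all μ,ν. Then the map Λ : Pin(3,1) → O(1,3) is surjective and two-to-one: for every λ ∈ M₄(ℝ) with λᵀ η λ = η there exist exactly two real 4×4 matrices S with |det S| = 1 and Σ_ν λ_{μν} B_ν = S⁻¹ B_μ S for all μ, and these two matrices are negatives of each other. -/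
/-!
Since `λ η λᵀ = η`, the matrices `B'_μ = Σ_ν λ_{μν} B_ν` satisfy the same Clifford relations as
`B`. For a Clifford family the 16 ordered monomials `Γ_e = B_0^{e_0} B_1^{e_1} B_2^{e_2} B_3^{e_3}`
are trace-orthogonal, because conjugation by `B_μ` multiplies `Γ_e` by a sign and these signs
determine `e`. So the `Γ_e` are a basis of `M₄(ℝ)`, and only scalars commute with all `B_μ`.
The averages `V = Σ_e Γ_e(B) G Γ_e(B')⁻¹` satisfy `B_μ V = V B'_μ`. Pairing them with the
averages `W` for `(B', B)` at matrix units, `Σ_{ij} tr(W_{ij} V_{ji}) = 16 · 4² ≠ 0`, so some `W V`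
is a nonzero scalar and that `V` is invertible; rescaling gives `|det S| = 1`. Any other
solution `S'` makes `S' S⁻¹` commute with all `B_μ`, so `S' = k S` with `|k|⁴ = 1`: `S' = ±S`.
-/

open Matrix

theorem mul_mul_eq_smul_of_mul_eq_smul {R M : Type*} [CommRing R] [Ring M] [Algebra R M]
    {x y z : M} {a b : R} (hy : x * y = a • (y * x)) (hz : x * z = b • (z * x)) :
    x * (y * z) = (a * b) • (y * z * x) := by
  rw [← mul_assoc, hy, smul_mul_assoc, mul_assoc, hz, mul_smul_comm, smul_smul, mul_assoc]

namespace Matrix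

variable {n : Type*} [Fintype n] [DecidableEq n]

theorem trace_eq_zero_of_mul_eq_neg_mul {K : Type*} [Field K] [NeZero (2 : K)]
    {A X : Matrix n n K} (hA : IsUnit A) (h : A * X = -(X * A)) : X.trace = 0 := by
  have hA' : IsUnit A.det := (isUnit_iff_isUnit_det A).mp hA
  have hconj : (A * X * A⁻¹).trace = X.trace := by
    rw [trace_mul_cycle, nonsing_inv_mul _ hA', one_mul]
  rw [h, neg_mul, mul_assoc, mul_nonsing_inv _ hA', mul_one, trace_neg, neg_eq_iff_add_eq_zero,
    ← two_mul] at hconj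
  exact (mul_eq_zero.mp hconj).resolve_left two_ne_zero

theorem sum_trace_mul_single_mul_mul_single_mul {R : Type*} [CommRing R]
    (A C C' D : Matrix n n R) :
    ∑ i, ∑ j, (A * single i j 1 * C * (C' * single j i 1 * D)).trace
      = (C * C').trace * (D * A).trace := by
  have hterm : ∀ i j, (A * single i j 1 * C * (C' * single j i 1 * D)).trace
      = (C * C') j j * (D * A) i i := by
    intro i j
    have hassoc : A * single i j 1 * C * (C' * single j i 1 * D)
        = A * (single i j 1 * (C * C') * single j i 1) * D := by
      simp only [mul_assoc]
    rw [hassoc, single_mul_mul_single, trace_mul_comm, ← mul_assoc, trace_mul_comm,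
      trace_single_mul, one_mul, mul_one, smul_eq_mul]
  simp_rw [hterm, ← Finset.sum_mul]
  rw [← Finset.mul_sum]
  rfl

theorem mul_mul_transpose_eq_of_transpose_mul_mul_eq {R : Type*} [CommRing R]
    {η L : Matrix n n R} (hη : η * η = 1) (hL : Lᵀ * η * L = η) : L * η * Lᵀ = η := by
  have hleft : η * Lᵀ * η * L = 1 := by
    simp only [mul_assoc] at hL ⊢
    rw [hL, hη]
  have hright : L * (η * Lᵀ * η) = 1 := mul_eq_one_comm.mp hleft
  calc L * η * Lᵀ = L * (η * Lᵀ * η) * η := by simp only [mul_assoc, hη, mul_one]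
    _ = η := by rw [hright, one_mul]

theorem inv_smul_mul_mul_smul {K : Type*} [Field K] {S : Matrix n n K} (hS : IsUnit S.det)
    {t : K} (ht : t ≠ 0) (X : Matrix n n K) : (t • S)⁻¹ * X * (t • S) = S⁻¹ * X * S := by
  rw [inv_eq_left_inv (B := t⁻¹ • S⁻¹) (by
      rw [smul_mul_smul_comm, inv_mul_cancel₀ ht, nonsing_inv_mul _ hS, one_smul]),
    smul_mul_assoc, smul_mul_assoc, mul_smul_comm, smul_smul, inv_mul_cancel₀ ht, one_smul]

theorem abs_det_neg (S : Matrix n n ℝ) : |(-S).det| = |S.det| := by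
  rw [det_neg, abs_mul, abs_pow, abs_neg, abs_one, one_pow, one_mul]

variable [Nonempty n]

theorem exists_abs_det_smul_eq_one {S : Matrix n n ℝ} (hS : S.det ≠ 0) :
    ∃ t : ℝ, t ≠ 0 ∧ |(t • S).det| = 1 := by
  have hpos : 0 < |S.det| := abs_pos.mpr hS
  have hcard : (Fintype.card n : ℝ) ≠ 0 := Nat.cast_ne_zero.mpr Fintype.card_ne_zero
  refine ⟨|S.det| ^ (-(Fintype.card n : ℝ)⁻¹), (Real.rpow_pos_of_pos hpos _).ne', ?_⟩
  rw [det_smul, abs_mul, abs_pow, abs_of_pos (Real.rpow_pos_of_pos hpos _),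
    ← Real.rpow_natCast, ← Real.rpow_mul hpos.le, neg_mul, inv_mul_cancel₀ hcard,
    Real.rpow_neg_one, inv_mul_cancel₀ hpos.ne']

theorem eq_or_eq_neg_of_abs_det_eq_one {S : Matrix n n ℝ} {k : ℝ}
    (hS : |S.det| = 1) (hkS : |(k • S).det| = 1) : k • S = S ∨ k • S = -S := by
  rw [det_smul, abs_mul, hS, mul_one, abs_pow,
    pow_eq_one_iff_of_nonneg (abs_nonneg k) Fintype.card_ne_zero] at hkS
  rcases abs_eq_abs.mp (hkS.trans abs_one.symm) with rfl | rfl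
  exacts [Or.inl (one_smul ℝ S), Or.inr (neg_one_smul ℝ S)]

theorem ne_neg_of_det_ne_zero {S : Matrix n n ℝ} (hS : S.det ≠ 0) : S ≠ -S := by
  intro h
  have h2 : (2 : ℝ) • S = 0 := by
    rw [two_smul]
    nth_rewrite 2 [h]
    exact add_neg_cancel S
  rw [(smul_eq_zero.mp h2).resolve_left two_ne_zero, det_zero] at hS
  exact hS rfl

end Matrix

def IsCliffordFamily {ι n R : Type*} [Fintype n] [DecidableEq n] [CommRing R]
    (g : Matrix ι ι R) (B : ι → Matrix n n R) : Prop :=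
  ∀ μ ν, B μ * B ν + B ν * B μ = (2 * g μ ν) • (1 : Matrix n n R)

namespace IsCliffordFamily

variable {ι n : Type*} [Fintype n] [DecidableEq n]

section CommRing

variable {R : Type*} [CommRing R]

theorem anticomm_sum [Fintype ι] {g : Matrix ι ι R} {B : ι → Matrix n n R}
    (hB : IsCliffordFamily g B) (a b : ι → R) :
    (∑ ρ, a ρ • B ρ) * (∑ σ, b σ • B σ) + (∑ σ, b σ • B σ) * (∑ ρ, a ρ • B ρ)
      = (2 * ∑ ρ, ∑ σ, a ρ * g ρ σ * b σ) • (1 : Matrix n n R) := by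
  rw [Finset.sum_mul_sum, Finset.sum_mul_sum, Finset.sum_comm (γ := ι), ← Finset.sum_add_distrib]
  simp_rw [← Finset.sum_add_distrib, smul_mul_smul, mul_comm (b _), ← smul_add, hB _ _, smul_smul,
    ← Finset.sum_smul, Finset.mul_sum]
  congr 1
  exact Finset.sum_comm.trans <|
    Finset.sum_congr rfl fun _ _ => Finset.sum_congr rfl fun _ _ => by ring

theorem transform [Fintype ι] {g : Matrix ι ι R} {B : ι → Matrix n n R}
    (hB : IsCliffordFamily g B) (lam : Matrix ι ι R) :
    IsCliffordFamily (lam * g * lamᵀ) (fun μ => ∑ ν, lam μ ν • B ν) := by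
  intro μ ν
  rw [hB.anticomm_sum]
  simp only [Matrix.mul_apply, Matrix.transpose_apply, Finset.sum_mul]
  rw [Finset.sum_comm]

theorem mul_eq_neg_mul [DecidableEq ι] {q : ι → R} {B : ι → Matrix n n R}
    (hB : IsCliffordFamily (diagonal q) B) {μ ν : ι} (h : μ ≠ ν) :
    B μ * B ν = -(B ν * B μ) := by
  have hμν := hB μ ν
  rwa [diagonal_apply_ne _ h, mul_zero, zero_smul, add_eq_zero_iff_eq_neg] at hμν

end CommRing

variable [DecidableEq ι] {K : Type*} [Field K] [NeZero (2 : K)] {q : ι → K}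
  {B : ι → Matrix n n K}

theorem mul_self (hB : IsCliffordFamily (diagonal q) B) (μ : ι) : B μ * B μ = q μ • 1 := by
  have h := hB μ μ
  rw [← two_smul K (B μ * B μ), diagonal_apply_eq, mul_smul] at h
  exact smul_right_injective _ two_ne_zero h

theorem isUnit (hB : IsCliffordFamily (diagonal q) B) {μ : ι} (hq : q μ ≠ 0) : IsUnit (B μ) :=
  IsUnit.of_mul_eq_one ((q μ)⁻¹ • B μ) <| by
    rw [mul_smul_comm, hB.mul_self, smul_smul, inv_mul_cancel₀ hq, one_smul]

end IsCliffordFamily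

def anticommParity (e : Fin 4 → Bool) (μ : Fin 4) : Bool :=
  (e 0 && 0 != μ) ^^ ((e 1 && 1 != μ) ^^ ((e 2 && 2 != μ) ^^ (e 3 && 3 != μ)))

theorem anticommParity_injective {e f : Fin 4 → Bool}
    (h : ∀ μ, anticommParity e μ = anticommParity f μ) : e = f := by
  revert e f
  decide

def boolSign (R : Type*) [Ring R] (b : Bool) : R := if b then -1 else 1

theorem boolSign_xor {R : Type*} [Ring R] (a b : Bool) :
    boolSign R (a ^^ b) = boolSign R a * boolSign R b := by
  cases a <;> cases b <;> simp [boolSign]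

theorem boolSign_mul_self {R : Type*} [Ring R] (b : Bool) : boolSign R b * boolSign R b = 1 := by
  cases b <;> simp [boolSign]

def flipAt (μ : Fin 4) (e : Fin 4 → Bool) : Fin 4 → Bool := Function.update e μ (!e μ)

theorem flipAt_involutive (μ : Fin 4) : Function.Involutive (flipAt μ) := by
  intro e
  simp [flipAt]

/-- Moving `B μ` to its slot in `cliffordMonomial B e` costs one sign per factor in front of it;
if `e μ`, the slot then holds `B μ * B μ = q μ`. -/
def flipSign {R : Type*} [CommRing R] (q : Fin 4 → R) (e : Fin 4 → Bool) (μ : Fin 4) : R :=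
  (∏ ν with ν < μ, boolSign R (e ν)) * if e μ then q μ else 1

section Monomial

variable {n R : Type*} [DecidableEq n] [CommRing R]

def cliffordFactor (B : Fin 4 → Matrix n n R) (e : Fin 4 → Bool) (μ : Fin 4) : Matrix n n R :=
  if e μ then B μ else 1

theorem cliffordFactor_flipAt_of_ne (B : Fin 4 → Matrix n n R) (e : Fin 4 → Bool) {μ ν : Fin 4}
    (h : ν ≠ μ) : cliffordFactor B (flipAt μ e) ν = cliffordFactor B e ν := by
  simp [cliffordFactor, flipAt, h]

variable [Fintype n]

def cliffordMonomial (B : Fin 4 → Matrix n n R) (e : Fin 4 → Bool) : Matrix n n R :=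
  cliffordFactor B e 0 * (cliffordFactor B e 1 * (cliffordFactor B e 2 * cliffordFactor B e 3))

noncomputable def cliffordIntertwiner {K : Type*} [Field K] (B B' : Fin 4 → Matrix n n K)
    (G : Matrix n n K) : Matrix n n K :=
  ∑ e, cliffordMonomial B e * G * (cliffordMonomial B' e)⁻¹

end Monomial

namespace IsCliffordFamily

section Monomial

variable {n : Type*} [Fintype n] [DecidableEq n]

section CommRing

variable {R : Type*} [CommRing R] {q : Fin 4 → R} {B : Fin 4 → Matrix n n R}

theorem mul_cliffordFactor (hB : IsCliffordFamily (diagonal q) B) (e : Fin 4 → Bool)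
    (μ ν : Fin 4) :
    B μ * cliffordFactor B e ν = boolSign R (e ν && ν != μ) • (cliffordFactor B e ν * B μ) := by
  unfold cliffordFactor boolSign
  by_cases hν : ν = μ
  · subst hν
    cases e ν <;> simp
  · cases e ν <;> simp [hB.mul_eq_neg_mul (Ne.symm hν), hν]

theorem mul_cliffordFactor_mul (hB : IsCliffordFamily (diagonal q) B) (e : Fin 4 → Bool)
    {μ ν : Fin 4} (h : ν ≠ μ) (X : Matrix n n R) :
    B μ * (cliffordFactor B e ν * X) = boolSign R (e ν) • (cliffordFactor B e ν * (B μ * X)) := by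
  rw [← mul_assoc, hB.mul_cliffordFactor, smul_mul_assoc, mul_assoc, bne_iff_ne.mpr h,
    Bool.and_true]

theorem mul_cliffordMonomial (hB : IsCliffordFamily (diagonal q) B) (e : Fin 4 → Bool)
    (μ : Fin 4) :
    B μ * cliffordMonomial B e
      = boolSign R (anticommParity e μ) • (cliffordMonomial B e * B μ) := by
  simp only [cliffordMonomial, anticommParity, boolSign_xor]
  exact mul_mul_eq_smul_of_mul_eq_smul (hB.mul_cliffordFactor e μ 0) <|
    mul_mul_eq_smul_of_mul_eq_smul (hB.mul_cliffordFactor e μ 1) <|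
      mul_mul_eq_smul_of_mul_eq_smul (hB.mul_cliffordFactor e μ 2) (hB.mul_cliffordFactor e μ 3)

end CommRing

variable {K : Type*} [Field K] [NeZero (2 : K)] {q : Fin 4 → K} {B B' : Fin 4 → Matrix n n K}

theorem mul_cliffordFactor_self (hB : IsCliffordFamily (diagonal q) B) (e : Fin 4 → Bool)
    (μ : Fin 4) :
    B μ * cliffordFactor B e μ = (if e μ then q μ else 1) • cliffordFactor B (flipAt μ e) μ := by
  cases h : e μ <;> simp [cliffordFactor, flipAt, h, hB.mul_self]

theorem mul_cliffordFactor_self_mul (hB : IsCliffordFamily (diagonal q) B) (e : Fin 4 → Bool)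
    (μ : Fin 4) (X : Matrix n n K) :
    B μ * (cliffordFactor B e μ * X)
      = (if e μ then q μ else 1) • (cliffordFactor B (flipAt μ e) μ * X) := by
  rw [← mul_assoc, hB.mul_cliffordFactor_self, smul_mul_assoc]

theorem mul_cliffordMonomial_eq_smul_flipAt (hB : IsCliffordFamily (diagonal q) B)
    (e : Fin 4 → Bool) (μ : Fin 4) :
    B μ * cliffordMonomial B e = flipSign q e μ • cliffordMonomial B (flipAt μ e) := by
  fin_cases μ <;>
    simp [cliffordMonomial, flipSign, Finset.prod_filter, Fin.prod_univ_four,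
      hB.mul_cliffordFactor_mul, hB.mul_cliffordFactor_self_mul, hB.mul_cliffordFactor_self,
      cliffordFactor_flipAt_of_ne, smul_smul, mul_assoc]

theorem isUnit_cliffordMonomial (hB : IsCliffordFamily (diagonal q) B) (hq : ∀ μ, q μ ≠ 0)
    (e : Fin 4 → Bool) : IsUnit (cliffordMonomial B e) := by
  have hfactor : ∀ μ, IsUnit (cliffordFactor B e μ) := fun μ => by
    unfold cliffordFactor
    split
    exacts [hB.isUnit (hq μ), isUnit_one]
  exact (hfactor 0).mul ((hfactor 1).mul ((hfactor 2).mul (hfactor 3)))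

theorem mul_inv_cliffordMonomial (hB : IsCliffordFamily (diagonal q) B) (hq : ∀ μ, q μ ≠ 0)
    (e : Fin 4 → Bool) (μ : Fin 4) :
    B μ * (cliffordMonomial B e)⁻¹
      = boolSign K (anticommParity e μ) • ((cliffordMonomial B e)⁻¹ * B μ) := by
  have hΓ := (isUnit_iff_isUnit_det _).mp (hB.isUnit_cliffordMonomial hq e)
  have hcomm : cliffordMonomial B e * B μ
      = boolSign K (anticommParity e μ) • (B μ * cliffordMonomial B e) := by
    rw [hB.mul_cliffordMonomial, smul_smul, boolSign_mul_self, one_smul]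
  calc B μ * (cliffordMonomial B e)⁻¹
      = (cliffordMonomial B e)⁻¹ * (cliffordMonomial B e * B μ) * (cliffordMonomial B e)⁻¹ := by
        rw [← mul_assoc, nonsing_inv_mul _ hΓ, one_mul]
    _ = _ := by
        rw [hcomm, mul_smul_comm, smul_mul_assoc, mul_assoc, mul_assoc, mul_nonsing_inv _ hΓ,
          mul_one]

theorem trace_inv_mul_cliffordMonomial (hB : IsCliffordFamily (diagonal q) B) (hq : ∀ μ, q μ ≠ 0)
    (e f : Fin 4 → Bool) :
    ((cliffordMonomial B f)⁻¹ * cliffordMonomial B e).trace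
      = if e = f then (Fintype.card n : K) else 0 := by
  split_ifs with hef
  · rw [hef, nonsing_inv_mul _ ((isUnit_iff_isUnit_det _).mp (hB.isUnit_cliffordMonomial hq f)),
      trace_one]
  obtain ⟨μ, hμ⟩ : ∃ μ, anticommParity e μ ≠ anticommParity f μ := by
    by_contra! h
    exact hef (anticommParity_injective h)
  refine trace_eq_zero_of_mul_eq_neg_mul (hB.isUnit (hq μ)) ?_
  rw [← mul_assoc, hB.mul_inv_cliffordMonomial hq, smul_mul_assoc, mul_assoc,
    hB.mul_cliffordMonomial, mul_smul_comm, smul_smul, ← mul_assoc]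
  cases h : anticommParity e μ <;> simp_all [boolSign]

theorem linearIndependent_cliffordMonomial (hB : IsCliffordFamily (diagonal q) B)
    (hq : ∀ μ, q μ ≠ 0) (hn : (Fintype.card n : K) ≠ 0) :
    LinearIndependent K (cliffordMonomial B) := by
  refine Fintype.linearIndependent_iff.mpr fun c hc f => ?_
  have h := congrArg (fun X => ((cliffordMonomial B f)⁻¹ * X).trace) hc
  simp only [Matrix.mul_sum, Matrix.mul_smul, trace_sum, trace_smul, smul_eq_mul,
    hB.trace_inv_mul_cliffordMonomial hq, mul_ite, mul_zero, Finset.sum_ite_eq', Finset.mem_univ,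
    trace_zero] at h
  exact (mul_eq_zero.mp h).resolve_right hn

theorem inv_cliffordMonomial_flipAt_mul (hB : IsCliffordFamily (diagonal q) B) (hq : ∀ μ, q μ ≠ 0)
    (e : Fin 4 → Bool) (μ : Fin 4) :
    (cliffordMonomial B (flipAt μ e))⁻¹ * B μ = flipSign q e μ • (cliffordMonomial B e)⁻¹ := by
  have hΓ := (isUnit_iff_isUnit_det _).mp (hB.isUnit_cliffordMonomial hq e)
  have hΓ' := (isUnit_iff_isUnit_det _).mp (hB.isUnit_cliffordMonomial hq (flipAt μ e))
  calc (cliffordMonomial B (flipAt μ e))⁻¹ * B μ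
      = (cliffordMonomial B (flipAt μ e))⁻¹ * (B μ * cliffordMonomial B e)
          * (cliffordMonomial B e)⁻¹ := by
        rw [← mul_assoc, mul_assoc _ _ (cliffordMonomial B e)⁻¹, mul_nonsing_inv _ hΓ, mul_one]
    _ = flipSign q e μ • (cliffordMonomial B e)⁻¹ := by
        rw [hB.mul_cliffordMonomial_eq_smul_flipAt, mul_smul_comm, nonsing_inv_mul _ hΓ',
          smul_mul_assoc, one_mul]

theorem mul_cliffordIntertwiner (hB : IsCliffordFamily (diagonal q) B) (hq : ∀ μ, q μ ≠ 0)
    (hB' : IsCliffordFamily (diagonal q) B') (G : Matrix n n K) (μ : Fin 4) :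
    B μ * cliffordIntertwiner B B' G = cliffordIntertwiner B B' G * B' μ := by
  unfold cliffordIntertwiner
  rw [Finset.mul_sum, Finset.sum_mul,
    ← (flipAt_involutive μ).bijective.sum_comp (fun e => _ * G * _ * B' μ)]
  refine Finset.sum_congr rfl fun e _ => ?_
  rw [mul_assoc _ _ (B' μ), hB'.inv_cliffordMonomial_flipAt_mul hq, ← mul_assoc, ← mul_assoc,
    hB.mul_cliffordMonomial_eq_smul_flipAt, mul_smul_comm, smul_mul_assoc, smul_mul_assoc]

theorem sum_trace_cliffordIntertwiner_mul (hB : IsCliffordFamily (diagonal q) B)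
    (hq : ∀ μ, q μ ≠ 0) (hB' : IsCliffordFamily (diagonal q) B') :
    ∑ i, ∑ j, (cliffordIntertwiner B' B (single i j 1)
        * cliffordIntertwiner B B' (single j i 1)).trace = 16 * (Fintype.card n : K) ^ 2 := by
  calc _ = ∑ e, ∑ f, ∑ i, ∑ j, (cliffordMonomial B' e * single i j 1
          * (cliffordMonomial B e)⁻¹ * (cliffordMonomial B f * single j i 1
          * (cliffordMonomial B' f)⁻¹)).trace := by
        simp only [cliffordIntertwiner, Finset.sum_mul_sum, trace_sum]
        simp_rw [Finset.sum_comm (s := (Finset.univ : Finset n))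
          (t := (Finset.univ : Finset (Fin 4 → Bool)))]
    _ = ∑ e, ∑ f, ((cliffordMonomial B e)⁻¹ * cliffordMonomial B f).trace
          * ((cliffordMonomial B' f)⁻¹ * cliffordMonomial B' e).trace := by
        simp only [sum_trace_mul_single_mul_mul_single_mul]
    _ = 16 * (Fintype.card n : K) ^ 2 := by
        simp [hB.trace_inv_mul_cliffordMonomial hq, hB'.trace_inv_mul_cliffordMonomial hq, sq]

end Monomial

section FourByFour

variable {K : Type*} [Field K] [NeZero (2 : K)] {q : Fin 4 → K}
  {B B' : Fin 4 → Matrix (Fin 4) (Fin 4) K}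

theorem span_cliffordMonomial (hB : IsCliffordFamily (diagonal q) B) (hq : ∀ μ, q μ ≠ 0) :
    Submodule.span K (Set.range (cliffordMonomial B)) = ⊤ := by
  refine (hB.linearIndependent_cliffordMonomial hq ?_).span_eq_top_of_card_eq_finrank ?_
  · rw [Fintype.card_fin, Nat.cast_ofNat, show (4 : K) = 2 * 2 by norm_num]
    exact mul_ne_zero two_ne_zero two_ne_zero
  · simp [Module.finrank_matrix]

theorem exists_eq_smul_one_of_commute (hB : IsCliffordFamily (diagonal q) B)
    (hq : ∀ μ, q μ ≠ 0) {M : Matrix (Fin 4) (Fin 4) K} (hM : ∀ μ, Commute (B μ) M) :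
    ∃ k : K, M = k • 1 := by
  have hcentral : Submodule.span K (Set.range (cliffordMonomial B))
      ≤ Subalgebra.toSubmodule (Subalgebra.centralizer K {M}) := by
    rw [Submodule.span_le]
    rintro _ ⟨e, rfl⟩
    simp only [SetLike.mem_coe, Subalgebra.mem_toSubmodule, Subalgebra.mem_centralizer_iff,
      Set.mem_singleton_iff, forall_eq]
    have hfactor : ∀ μ, Commute M (cliffordFactor B e μ) := fun μ => by
      unfold cliffordFactor
      split
      exacts [(hM μ).symm, Commute.one_right M]
    exact ((hfactor 0).mul_right ((hfactor 1).mul_right ((hfactor 2).mul_right (hfactor 3)))).eq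
  rw [hB.span_cliffordMonomial hq, top_le_iff] at hcentral
  have hall : ∀ N : Matrix (Fin 4) (Fin 4) K, Commute N M := fun N =>
    ((Subalgebra.mem_centralizer_iff K).mp (hcentral.ge (Submodule.mem_top (x := N))) M rfl).symm
  obtain ⟨k, hk⟩ := mem_range_scalar_iff_commute_single'.mpr fun i j => hall (single i j 1)
  exact ⟨k, by rw [← hk, scalar_apply, smul_one_eq_diagonal]⟩

theorem exists_inv_mul_mul_eq (hB : IsCliffordFamily (diagonal q) B)
    (hB' : IsCliffordFamily (diagonal q) B') (hq : ∀ μ, q μ ≠ 0) :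
    ∃ S : Matrix (Fin 4) (Fin 4) K, IsUnit S.det ∧ ∀ μ, S⁻¹ * B μ * S = B' μ := by
  have hne : 16 * ((Fintype.card (Fin 4) : K)) ^ 2 ≠ 0 := by
    rw [Fintype.card_fin, Nat.cast_ofNat, show (16 * 4 ^ 2 : K) = 2 ^ 8 by norm_num]
    exact pow_ne_zero _ two_ne_zero
  rw [← hB.sum_trace_cliffordIntertwiner_mul hq hB'] at hne
  obtain ⟨i, -, hi⟩ := Finset.exists_ne_zero_of_sum_ne_zero hne
  obtain ⟨j, -, hij⟩ := Finset.exists_ne_zero_of_sum_ne_zero hi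
  set W := cliffordIntertwiner B' B (single i j 1)
  set V := cliffordIntertwiner B B' (single j i 1)
  have hWV : ∀ μ, Commute (B' μ) (W * V) := fun μ => by
    rw [Commute, SemiconjBy, ← mul_assoc, hB'.mul_cliffordIntertwiner hq hB, mul_assoc,
      hB.mul_cliffordIntertwiner hq hB', mul_assoc]
  obtain ⟨κ, hκ⟩ := hB'.exists_eq_smul_one_of_commute hq hWV
  have hκ0 : κ ≠ 0 := by
    rintro rfl
    rw [hκ, zero_smul, trace_zero] at hij
    exact hij rfl
  have hV : IsUnit V.det := isUnit_det_of_left_inverse (B := κ⁻¹ • W) <| by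
    rw [smul_mul_assoc, hκ, smul_smul, inv_mul_cancel₀ hκ0, one_smul]
  refine ⟨V, hV, fun μ => ?_⟩
  rw [mul_assoc, hB.mul_cliffordIntertwiner hq hB', ← mul_assoc, nonsing_inv_mul _ hV, one_mul]

theorem exists_eq_smul_of_inv_mul_mul_eq (hB : IsCliffordFamily (diagonal q) B)
    (hq : ∀ μ, q μ ≠ 0) {S T : Matrix (Fin 4) (Fin 4) K} (hS : IsUnit S.det) (hT : IsUnit T.det)
    (h : ∀ μ, S⁻¹ * B μ * S = T⁻¹ * B μ * T) : ∃ k : K, T = k • S := by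
  have hcomm : ∀ μ, Commute (B μ) (T * S⁻¹) := fun μ => by
    have hμ := congrArg (fun X => T * X * S⁻¹) (h μ)
    simp only [← mul_assoc, mul_nonsing_inv _ hT, one_mul] at hμ
    rw [mul_assoc, mul_assoc, mul_nonsing_inv _ hS, mul_one] at hμ
    rw [Commute, SemiconjBy, ← mul_assoc]
    exact hμ.symm
  obtain ⟨k, hk⟩ := hB.exists_eq_smul_one_of_commute hq hcomm
  refine ⟨k, ?_⟩
  rw [← smul_one_mul, ← hk, mul_assoc, nonsing_inv_mul _ hS, mul_one]

end FourByFour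

section Real

variable {q : Fin 4 → ℝ} {B B' : Fin 4 → Matrix (Fin 4) (Fin 4) ℝ}

theorem exists_abs_det_eq_one (hB : IsCliffordFamily (diagonal q) B)
    (hB' : IsCliffordFamily (diagonal q) B') (hq : ∀ μ, q μ ≠ 0) :
    ∃ S : Matrix (Fin 4) (Fin 4) ℝ, |S.det| = 1 ∧ ∀ μ, B' μ = S⁻¹ * B μ * S := by
  obtain ⟨S, hS, hSB⟩ := hB.exists_inv_mul_mul_eq hB' hq
  obtain ⟨t, ht, hdet⟩ := exists_abs_det_smul_eq_one hS.ne_zero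
  exact ⟨t • S, hdet, fun μ => by rw [inv_smul_mul_mul_smul hS ht, hSB]⟩

theorem setOf_abs_det_eq_one (hB : IsCliffordFamily (diagonal q) B) (hq : ∀ μ, q μ ≠ 0)
    {S : Matrix (Fin 4) (Fin 4) ℝ} (hS : |S.det| = 1) (hSB : ∀ μ, B' μ = S⁻¹ * B μ * S) :
    {T : Matrix (Fin 4) (Fin 4) ℝ | |T.det| = 1 ∧ ∀ μ, B' μ = T⁻¹ * B μ * T} = {S, -S} := by
  have isUnit_det : ∀ {T : Matrix (Fin 4) (Fin 4) ℝ}, |T.det| = 1 → IsUnit T.det := fun hT =>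
    isUnit_iff_ne_zero.mpr fun h0 => by simp [h0] at hT
  ext T
  constructor
  · rintro ⟨hT, hTB⟩
    obtain ⟨k, rfl⟩ := hB.exists_eq_smul_of_inv_mul_mul_eq hq (isUnit_det hS) (isUnit_det hT)
      fun μ => (hSB μ).symm.trans (hTB μ)
    exact eq_or_eq_neg_of_abs_det_eq_one hS hT
  · rintro (rfl | rfl)
    · exact ⟨hS, hSB⟩
    · refine ⟨(abs_det_neg S).trans hS, fun μ => ?_⟩
      rw [← neg_one_smul ℝ S, inv_smul_mul_mul_smul (isUnit_det hS) (neg_ne_zero.mpr one_ne_zero),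
        hSB]

end Real

end IsCliffordFamily

theorem neg_minkowskiEta : -minkowskiEta = diagonal ![-1, 1, 1, 1] := by
  rw [minkowskiEta, diagonal_neg]
  congr 1
  ext μ
  fin_cases μ <;> simp

theorem minkowskiEta_mul_self : minkowskiEta * minkowskiEta = 1 := by
  rw [minkowskiEta, diagonal_mul_diagonal, ← diagonal_one]
  congr 1
  ext μ
  fin_cases μ <;> simp

/-- The map `Λ : Pin(3,1) → O(1,3)` is surjective and two-to-one: for every
Lorentz matrix `λ` (i.e. `λᵀ η λ = η`) the set of real 4×4 matrices `S` with `|det S| = 1`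
and `Σ_ν λ_{μν} B_ν = S⁻¹ B_μ S` for all `μ` consists of exactly two matrices, which are
negatives of each other. -/
theorem pin_covers_lorentz_two_to_one
    (B : Fin 4 → Matrix (Fin 4) (Fin 4) ℝ)
    (hB : ∀ μ ν, B μ * B ν + B ν * B μ =
      (-2 * minkowskiEta μ ν) • (1 : Matrix (Fin 4) (Fin 4) ℝ))
    (lam : Matrix (Fin 4) (Fin 4) ℝ)
    (hlam : lamᵀ * minkowskiEta * lam = minkowskiEta) :
    ∃ S : Matrix (Fin 4) (Fin 4) ℝ, S ≠ -S ∧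
      {S' : Matrix (Fin 4) (Fin 4) ℝ |
        |S'.det| = 1 ∧ ∀ μ, (∑ ν, lam μ ν • B ν) = S'⁻¹ * B μ * S'} = {S, -S} := by
  have hq : ∀ μ, ![(-1 : ℝ), 1, 1, 1] μ ≠ 0 := by
    intro μ
    fin_cases μ <;> norm_num
  have hB₀ : IsCliffordFamily (diagonal ![-1, 1, 1, 1]) B := fun μ ν => by
    rw [hB, ← neg_minkowskiEta, neg_apply, mul_neg, neg_mul]
  have hB' : IsCliffordFamily (diagonal ![-1, 1, 1, 1]) (fun μ => ∑ ν, lam μ ν • B ν) := by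
    have h := hB₀.transform lam
    rwa [← neg_minkowskiEta, mul_neg, neg_mul,
      mul_mul_transpose_eq_of_transpose_mul_mul_eq minkowskiEta_mul_self hlam,
      neg_minkowskiEta] at h
  obtain ⟨S, hS, hSB⟩ := hB₀.exists_abs_det_eq_one hB' hq
  exact ⟨S, ne_neg_of_det_ne_zero fun h0 => by simp [h0] at hS,
    hB₀.setOf_abs_det_eq_one hq hS hSB⟩
end

section
/- Let S₁,S₂,S₃,A₁,A₂,A₃ be 8×8 real orthogonal matrices such that each S_k is symmetric, each A_k is antisymmetric, and the six matrices pairwise anticommute. Define Σ_k = S_k for k = 1,2,3, Σ₄ = A₁A₂A₃, and Σ₅ = Σ₁Σ₂Σ₃Σ₄. Then Σ₁,…,Σ₅ are symmetric orthogonal matrices (in particular Σ_a² = I for each a), they pairwise anticommute (Σ_a Σ_b = −Σ_b Σ_a for a ≠ b), and each Σ_a commutes with each of the matrices A₁A₂, A₂A₃ and A₃A₁ (the generators of the gauge SU(2)_L transformations). -/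
open Matrix

/-- The five matrices `Σ₁,Σ₂,Σ₃,Σ₄,Σ₅` built from the symmetric matrices `S k` and the
antisymmetric matrices `A k`: `Σ_k = S_k` for `k = 1,2,3`, `Σ₄ = A₁A₂A₃` and
`Σ₅ = Σ₁Σ₂Σ₃Σ₄`. -/
noncomputable def SigmaMat (S A : Fin 3 → Matrix (Fin 8) (Fin 8) ℝ) :
    Fin 5 → Matrix (Fin 8) (Fin 8) ℝ :=
  ![S 0, S 1, S 2, A 0 * A 1 * A 2, S 0 * S 1 * S 2 * (A 0 * A 1 * A 2)]

section
variable {R : Type*} [Ring R]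
theorem aux_flip {x y : R} (h : x * y = -(y * x)) : y * x = -(x * y) := by rw [h, neg_neg]
theorem aux_cc {x a b : R} (ha : x * a = a * x) (hb : x * b = b * x) :
    x * (a * b) = a * b * x := by rw [← mul_assoc, ha, mul_assoc, hb, ← mul_assoc]
theorem aux_aa {x a b : R} (ha : x * a = -(a * x)) (hb : x * b = -(b * x)) :
    x * (a * b) = a * b * x := by
  rw [← mul_assoc, ha, neg_mul, mul_assoc, hb, mul_neg, neg_neg, ← mul_assoc]
theorem aux_ca {x a b : R} (ha : x * a = a * x) (hb : x * b = -(b * x)) :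
    x * (a * b) = -(a * b * x) := by
  rw [← mul_assoc, ha, mul_assoc, hb, mul_neg, ← mul_assoc]
theorem aux_ac {x a b : R} (ha : x * a = -(a * x)) (hb : x * b = b * x) :
    x * (a * b) = -(a * b * x) := by
  rw [← mul_assoc, ha, neg_mul, mul_assoc, hb, ← mul_assoc]
theorem aux_cube_sq {a b c : R} (hba : b * a = -(a * b)) (hca : c * a = -(a * c))
    (hcb : c * b = -(b * c)) :
    (a * b * c) * (a * b * c) = -((a * a) * ((b * b) * (c * c))) := by
  have h1 : (a*b*c) * (a*b*c) = a * (b * (c * (a * (b * c)))) := by noncomm_ring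
  have h2 : c * (a * (b * c)) = -(a * (c * (b * c))) := by rw [← mul_assoc, hca]; noncomm_ring
  have h3 : c * (b * c) = -(b * (c * c)) := by rw [← mul_assoc, hcb]; noncomm_ring
  have h4 : b * (a * (b * (c * c))) = -(a * (b * (b * (c * c)))) := by
    rw [← mul_assoc, hba]; noncomm_ring
  rw [h1, h2, h3]
  simp only [mul_neg, neg_neg]
  rw [h4]
  noncomm_ring
end


/-- For 8×8 real orthogonal matrices `S₁,S₂,S₃` (symmetric) and
`A₁,A₂,A₃` (antisymmetric) which pairwise anticommute, the matrices `Σ₁,…,Σ₅` are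
symmetric orthogonal (in particular `Σ_a² = I`), pairwise anticommute, and each `Σ_a`
commutes with each of `A₁A₂`, `A₂A₃` and `A₃A₁` (the generators of the gauge `SU(2)_L`
transformations). -/
theorem sigma_matrices_properties
    (S A : Fin 3 → Matrix (Fin 8) (Fin 8) ℝ)
    (hSorth : ∀ k, (S k)ᵀ * S k = 1)
    (hAorth : ∀ k, (A k)ᵀ * A k = 1)
    (hSsymm : ∀ k, (S k)ᵀ = S k)
    (hAanti : ∀ k, (A k)ᵀ = -(A k))
    (hSS : ∀ k l, k ≠ l → S k * S l = -(S l * S k))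
    (hAA : ∀ k l, k ≠ l → A k * A l = -(A l * A k))
    (hSA : ∀ k l, S k * A l = -(A l * S k)) :
    (∀ a, (SigmaMat S A a)ᵀ = SigmaMat S A a) ∧
    (∀ a, (SigmaMat S A a)ᵀ * SigmaMat S A a = 1) ∧
    (∀ a, SigmaMat S A a * SigmaMat S A a = 1) ∧
    (∀ a b, a ≠ b → SigmaMat S A a * SigmaMat S A b = -(SigmaMat S A b * SigmaMat S A a)) ∧
    (∀ a, SigmaMat S A a * (A 0 * A 1) = (A 0 * A 1) * SigmaMat S A a ∧
          SigmaMat S A a * (A 1 * A 2) = (A 1 * A 2) * SigmaMat S A a ∧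
          SigmaMat S A a * (A 2 * A 0) = (A 2 * A 0) * SigmaMat S A a) := by
  have d01 : (0:Fin 3) ≠ 1 := by decide
  have d02 : (0:Fin 3) ≠ 2 := by decide
  have d10 : (1:Fin 3) ≠ 0 := by decide
  have d12 : (1:Fin 3) ≠ 2 := by decide
  have d20 : (2:Fin 3) ≠ 0 := by decide
  have d21 : (2:Fin 3) ≠ 1 := by decide
  have hS2 : ∀ k, S k * S k = 1 := fun k => by
    have h := hSorth k; rwa [hSsymm k] at h
  have hA2 : ∀ k, A k * A k = -1 := fun k => by
    have h := hAorth k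
    rw [hAanti k, neg_mul] at h
    exact neg_eq_iff_eq_neg.mp h
  -- commutation of single factors with P = A0A1A2 and Q = S0S1S2
  have hA0P : A 0 * (A 0 * A 1 * A 2) = (A 0 * A 1 * A 2) * A 0 :=
    aux_aa (aux_ca rfl (hAA 0 1 d01)) (hAA 0 2 d02)
  have hA1P : A 1 * (A 0 * A 1 * A 2) = (A 0 * A 1 * A 2) * A 1 :=
    aux_aa (aux_ac (hAA 1 0 d10) rfl) (hAA 1 2 d12)
  have hA2P : A 2 * (A 0 * A 1 * A 2) = (A 0 * A 1 * A 2) * A 2 :=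
    aux_cc (aux_aa (hAA 2 0 d20) (hAA 2 1 d21)) rfl
  have hS0Q : S 0 * (S 0 * S 1 * S 2) = (S 0 * S 1 * S 2) * S 0 :=
    aux_aa (aux_ca rfl (hSS 0 1 d01)) (hSS 0 2 d02)
  have hS1Q : S 1 * (S 0 * S 1 * S 2) = (S 0 * S 1 * S 2) * S 1 :=
    aux_aa (aux_ac (hSS 1 0 d10) rfl) (hSS 1 2 d12)
  have hS2Q : S 2 * (S 0 * S 1 * S 2) = (S 0 * S 1 * S 2) * S 2 :=
    aux_cc (aux_aa (hSS 2 0 d20) (hSS 2 1 d21)) rfl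
  have hSQ : ∀ k, S k * (S 0 * S 1 * S 2) = (S 0 * S 1 * S 2) * S k := by
    intro k; fin_cases k
    exacts [hS0Q, hS1Q, hS2Q]
  have hSkP : ∀ k, S k * (A 0 * A 1 * A 2) = -((A 0 * A 1 * A 2) * S k) := fun k =>
    aux_ca (aux_aa (hSA k 0) (hSA k 1)) (hSA k 2)
  have hAkQ : ∀ k, A k * (S 0 * S 1 * S 2) = -((S 0 * S 1 * S 2) * A k) := fun k =>
    aux_ca (aux_aa (aux_flip (hSA 0 k)) (aux_flip (hSA 1 k))) (aux_flip (hSA 2 k))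
  have hPQ : (A 0 * A 1 * A 2) * (S 0 * S 1 * S 2) = -((S 0 * S 1 * S 2) * (A 0 * A 1 * A 2)) :=
    aux_ca (aux_aa (aux_flip (hSkP 0)) (aux_flip (hSkP 1))) (aux_flip (hSkP 2))
  -- squares
  have hP2 : (A 0 * A 1 * A 2) * (A 0 * A 1 * A 2) = 1 := by
    rw [aux_cube_sq (hAA 1 0 d10) (hAA 2 0 d20) (hAA 2 1 d21), hA2 0, hA2 1, hA2 2]
    noncomm_ring
  have hQ2 : (S 0 * S 1 * S 2) * (S 0 * S 1 * S 2) = -1 := by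
    rw [aux_cube_sq (hSS 1 0 d10) (hSS 2 0 d20) (hSS 2 1 d21), hS2 0, hS2 1, hS2 2]
    noncomm_ring
  have hSig5sq : (S 0 * S 1 * S 2 * (A 0 * A 1 * A 2)) * (S 0 * S 1 * S 2 * (A 0 * A 1 * A 2)) = 1 := by
    have h1 : (A 0 * A 1 * A 2) * (S 0 * S 1 * S 2 * (A 0 * A 1 * A 2))
        = -((S 0 * S 1 * S 2) * ((A 0 * A 1 * A 2) * (A 0 * A 1 * A 2))) := by
      rw [← mul_assoc, hPQ]; noncomm_ring
    calc (S 0 * S 1 * S 2 * (A 0 * A 1 * A 2)) * (S 0 * S 1 * S 2 * (A 0 * A 1 * A 2))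
        = (S 0 * S 1 * S 2) * ((A 0 * A 1 * A 2) * (S 0 * S 1 * S 2 * (A 0 * A 1 * A 2))) := by
          rw [mul_assoc]
      _ = 1 := by rw [h1, hP2, mul_one, mul_neg, hQ2, neg_neg]
  -- transposes
  have hPt : (A 0 * A 1 * A 2)ᵀ = A 0 * A 1 * A 2 := by
    rw [transpose_mul, transpose_mul, hAanti 0, hAanti 1, hAanti 2]
    simp only [neg_mul, mul_neg, neg_neg]
    rw [hAA 1 0 d10]
    simp only [mul_neg, neg_neg]
    exact aux_aa (hAA 2 0 d20) (hAA 2 1 d21)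
  have hQt : (S 0 * S 1 * S 2)ᵀ = -(S 0 * S 1 * S 2) := by
    rw [transpose_mul, transpose_mul, hSsymm 0, hSsymm 1, hSsymm 2]
    rw [hSS 1 0 d10, mul_neg, aux_aa (hSS 2 0 d20) (hSS 2 1 d21)]
  have hSig5t : (S 0 * S 1 * S 2 * (A 0 * A 1 * A 2))ᵀ = S 0 * S 1 * S 2 * (A 0 * A 1 * A 2) := by
    rw [transpose_mul, hPt, hQt, mul_neg, hPQ, neg_neg]
  -- generators
  have hSG : ∀ k i j, S k * (A i * A j) = (A i * A j) * S k := fun k i j =>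
    (aux_aa (hSA k i) (hSA k j)).trans rfl
  have hPA : ∀ i, (A 0 * A 1 * A 2) * A i = A i * (A 0 * A 1 * A 2) := by
    intro i; fin_cases i
    exacts [hA0P.symm, hA1P.symm, hA2P.symm]
  have hPG : ∀ i j, (A 0 * A 1 * A 2) * (A i * A j) = (A i * A j) * (A 0 * A 1 * A 2) :=
    fun i j => aux_cc (hPA i) (hPA j)
  have hQA : ∀ i, (S 0 * S 1 * S 2) * A i = -(A i * (S 0 * S 1 * S 2)) := fun i =>
    aux_flip (hAkQ i)
  have hQG : ∀ i j, (S 0 * S 1 * S 2) * (A i * A j) = (A i * A j) * (S 0 * S 1 * S 2) :=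
    fun i j => aux_aa (hQA i) (hQA j)
  have hSig5G : ∀ i j, (S 0 * S 1 * S 2 * (A 0 * A 1 * A 2)) * (A i * A j)
      = (A i * A j) * (S 0 * S 1 * S 2 * (A 0 * A 1 * A 2)) := by
    intro i j
    rw [mul_assoc, hPG i j, ← mul_assoc, hQG i j, mul_assoc]
  -- anticommutes involving Σ4 and Σ5
  have h04 : ∀ k, S k * (S 0 * S 1 * S 2 * (A 0 * A 1 * A 2))
      = -((S 0 * S 1 * S 2 * (A 0 * A 1 * A 2)) * S k) := fun k =>
    aux_ca (hSQ k) (hSkP k)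
  have h34 : (A 0 * A 1 * A 2) * (S 0 * S 1 * S 2 * (A 0 * A 1 * A 2))
      = -((S 0 * S 1 * S 2 * (A 0 * A 1 * A 2)) * (A 0 * A 1 * A 2)) :=
    aux_ac hPQ rfl
  -- assembled facts
  have hsymSig : ∀ a, (SigmaMat S A a)ᵀ = SigmaMat S A a := by
    intro a; fin_cases a
    exacts [hSsymm 0, hSsymm 1, hSsymm 2, hPt, hSig5t]
  have hsqSig : ∀ a, SigmaMat S A a * SigmaMat S A a = 1 := by
    intro a; fin_cases a
    exacts [hS2 0, hS2 1, hS2 2, hP2, hSig5sq]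
  refine ⟨hsymSig, fun a => by rw [hsymSig a]; exact hsqSig a, hsqSig, ?_, ?_⟩
  · intro a b hab
    fin_cases a <;> fin_cases b
    exacts [absurd rfl hab, hSS 0 1 d01, hSS 0 2 d02, hSkP 0, h04 0,
      hSS 1 0 d10, absurd rfl hab, hSS 1 2 d12, hSkP 1, h04 1,
      hSS 2 0 d20, hSS 2 1 d21, absurd rfl hab, hSkP 2, h04 2,
      aux_flip (hSkP 0), aux_flip (hSkP 1), aux_flip (hSkP 2), absurd rfl hab, h34,
      aux_flip (h04 0), aux_flip (h04 1), aux_flip (h04 2), aux_flip h34, absurd rfl hab]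
  · intro a
    fin_cases a
    exacts [⟨hSG 0 0 1, hSG 0 1 2, hSG 0 2 0⟩,
      ⟨hSG 1 0 1, hSG 1 1 2, hSG 1 2 0⟩,
      ⟨hSG 2 0 1, hSG 2 1 2, hSG 2 2 0⟩,
      ⟨hPG 0 1, hPG 1 2, hPG 2 0⟩,
      ⟨hSig5G 0 1, hSig5G 1 2, hSig5G 2 0⟩]
end

section
/- Let B_μ (μ = 0,1,2,3) be 4×4 real orthogonal matrices satisfying B_μ B_ν + B_ν B_μ = −2 η_{μν} I for all μ,ν. Let m ≥ 0 and p ∈ ℝ³ with p ≠ 0, and set E = √(|p|² + m²), a = √((E+m)/(2E)), b = √((E−m)/(2E)), and G = |p|⁻¹ (Σ_{k=1}^{3} p_k B_k) B₀. Then the 8×8 real block matrix with blocks [[a·I, −b·G],[b·G, a·I]] is orthogonal. -/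
/-! With `p̸ = Σ_k p_k B_k`, the Clifford relations give `p̸² = |p|²` and `B₀ p̸ = -p̸ B₀`, hence
`(p̸ B₀)² = -p̸² B₀² = |p|²` and `G² = 1`. Orthogonality makes `B₀` antisymmetric and the `B_k`
symmetric, so `(p̸ B₀)ᵀ = -B₀ p̸ = p̸ B₀` and `G` is symmetric. A block matrix
`[[a, -bG], [bG, a]]` with `G` symmetric, `G² = 1` and `a² + b² = 1` is orthogonal, and
`a² + b² = ((E + m) + (E - m)) / 2E = 1` since `E ≥ |m|`. -/

open Matrix

section Clifford

variable {𝕜 A : Type*} [Field 𝕜] [Ring A] [Algebra 𝕜 A]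

theorem mul_sum_smul_eq_neg_of_anticomm {ι : Type*} [Fintype ι] {x : A} (C : ι → A)
    (hC : ∀ i, x * C i = -(C i * x)) (p : ι → 𝕜) :
    x * ∑ i, p i • C i = -((∑ i, p i • C i) * x) := by
  simp only [Finset.mul_sum, Finset.sum_mul, mul_smul_comm, smul_mul_assoc, hC, smul_neg,
    Finset.sum_neg_distrib]

variable [CharZero 𝕜]

theorem eq_of_add_self_eq_two_smul {x y : A} (h : x + x = (2 : 𝕜) • y) : x = y := by
  have h2 : (2 : 𝕜) • x = (2 : 𝕜) • y := by rw [two_smul]; exact h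
  exact smul_right_injective A two_ne_zero h2

theorem sum_smul_mul_self_eq_of_clifford {ι : Type*} [Fintype ι] (C : ι → A) (Q : ι → ι → 𝕜)
    (hC : ∀ i j, C i * C j + C j * C i = (2 * Q i j) • 1) (p : ι → 𝕜) :
    (∑ i, p i • C i) * (∑ i, p i • C i) = (∑ i, ∑ j, p i * p j * Q i j) • 1 := by
  have expand : (∑ i, p i • C i) * (∑ i, p i • C i) = ∑ i, ∑ j, (p i * p j) • (C i * C j) := by
    simp only [Finset.sum_mul_sum, smul_mul_smul_comm]
  have expand_swap : (∑ i, p i • C i) * (∑ i, p i • C i)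
      = ∑ i, ∑ j, (p i * p j) • (C j * C i) := by
    rw [expand, Finset.sum_comm]
    exact Finset.sum_congr rfl fun i _ => Finset.sum_congr rfl fun j _ => by rw [mul_comm (p j)]
  apply eq_of_add_self_eq_two_smul (𝕜 := 𝕜)
  calc (∑ i, p i • C i) * (∑ i, p i • C i) + (∑ i, p i • C i) * (∑ i, p i • C i)
      = ∑ i, ∑ j, (p i * p j) • (C i * C j + C j * C i) := by
        rw [congrArg₂ (· + ·) expand expand_swap]
        simp only [smul_add, Finset.sum_add_distrib]
    _ = (2 : 𝕜) • (∑ i, ∑ j, p i * p j * Q i j) • 1 := by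
        simp only [hC, smul_smul, Finset.sum_smul, Finset.smul_sum]
        congr! 3
        ring

end Clifford

theorem Matrix.smul_transpose_eq_of_mul_self {n R : Type*} [Fintype n] [DecidableEq n] [CommRing R]
    {M : Matrix n n R} {c : R} (horth : Mᵀ * M = 1) (hsq : M * M = c • 1) : c • Mᵀ = M := by
  calc c • Mᵀ = Mᵀ * (M * M) := by rw [hsq, Matrix.mul_smul, Matrix.mul_one]
    _ = M := by rw [← Matrix.mul_assoc, horth, Matrix.one_mul]

theorem Matrix.fromBlocks_rotation_orthogonal {n R : Type*} [Fintype n] [DecidableEq n] [CommRing R]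
    {G : Matrix n n R} (hGT : Gᵀ = G) (hGG : G * G = 1) {a b : R} (hab : a ^ 2 + b ^ 2 = 1) :
    (fromBlocks (a • 1) (-(b • G)) (b • G) (a • 1))ᵀ * fromBlocks (a • 1) (-(b • G)) (b • G) (a • 1)
      = 1 := by
  rw [fromBlocks_transpose, fromBlocks_multiply, ← fromBlocks_one]
  simp only [transpose_smul, transpose_neg, transpose_one, hGT, mul_one,
    one_mul, neg_mul, mul_neg, hGG, smul_mul_assoc, mul_smul_comm]
  congr 1
  · linear_combination (norm := module) hab • (1 : Matrix n n R)
  · module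
  · module
  · linear_combination (norm := module) hab • (1 : Matrix n n R)

theorem sqrt_add_div_sq_add_sqrt_sub_div_sq {E m : ℝ} (hE : 0 < E) (hm : |m| ≤ E) :
    √((E + m) / (2 * E)) ^ 2 + √((E - m) / (2 * E)) ^ 2 = 1 := by
  have hm' := abs_le.mp hm
  rw [Real.sq_sqrt (div_nonneg (by linarith) (by positivity)),
    Real.sq_sqrt (div_nonneg (by linarith) (by positivity))]
  field_simp
  ring

theorem minkowskiEta_zero_zero : minkowskiEta 0 0 = 1 := by
  simp [minkowskiEta]

theorem minkowskiEta_zero_succ (k : Fin 3) : minkowskiEta 0 k.succ = 0 :=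
  diagonal_apply_ne _ (Fin.succ_ne_zero k).symm

theorem minkowskiEta_succ_succ (j k : Fin 3) :
    minkowskiEta j.succ k.succ = -(if j = k then 1 else 0) := by
  fin_cases j <;> fin_cases k <;> simp [minkowskiEta]

def spatialSlashMulZero (B : Fin 4 → Matrix (Fin 4) (Fin 4) ℝ) (p : Fin 3 → ℝ) :
    Matrix (Fin 4) (Fin 4) ℝ :=
  (∑ k, p k • B k.succ) * B 0

section Majorana

variable {B : Fin 4 → Matrix (Fin 4) (Fin 4) ℝ}
  (hB : ∀ μ ν, B μ * B ν + B ν * B μ = (-2 * minkowskiEta μ ν) • (1 : Matrix (Fin 4) (Fin 4) ℝ))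
include hB

theorem zero_mul_self_of_clifford : B 0 * B 0 = -1 :=
  eq_of_add_self_eq_two_smul (𝕜 := ℝ) <| by
    rw [hB, minkowskiEta_zero_zero, smul_neg, ← neg_smul]; norm_num

theorem succ_mul_self_of_clifford (k : Fin 3) : B k.succ * B k.succ = 1 :=
  eq_of_add_self_eq_two_smul (𝕜 := ℝ) (by rw [hB, minkowskiEta_succ_succ]; norm_num)

theorem zero_mul_succ_of_clifford (k : Fin 3) : B 0 * B k.succ = -(B k.succ * B 0) :=
  eq_neg_of_add_eq_zero_left (by rw [hB, minkowskiEta_zero_succ]; simp)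

theorem sum_smul_succ_mul_self_of_clifford (p : Fin 3 → ℝ) :
    (∑ k, p k • B k.succ) * (∑ k, p k • B k.succ) = (∑ k, p k ^ 2) • 1 := by
  rw [sum_smul_mul_self_eq_of_clifford (fun k => B k.succ)
    (fun j k => -minkowskiEta j.succ k.succ) (fun j k => by rw [hB]; ring_nf) p]
  simp [minkowskiEta_succ_succ, mul_ite, Finset.sum_ite_eq, sq]

theorem spatialSlashMulZero_mul_self (p : Fin 3 → ℝ) :
    spatialSlashMulZero B p * spatialSlashMulZero B p = (∑ k, p k ^ 2) • 1 := by
  set S := ∑ k, p k • B k.succ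
  have hanti : B 0 * S = -(S * B 0) :=
    mul_sum_smul_eq_neg_of_anticomm _ (zero_mul_succ_of_clifford hB) p
  calc S * B 0 * (S * B 0) = -(S * S * (B 0 * B 0)) := by
        rw [Matrix.mul_assoc, ← Matrix.mul_assoc (B 0), hanti]; noncomm_ring
    _ = (∑ k, p k ^ 2) • 1 := by
        rw [sum_smul_succ_mul_self_of_clifford hB, zero_mul_self_of_clifford hB]; simp

theorem transpose_spatialSlashMulZero (horth : ∀ μ, (B μ)ᵀ * B μ = 1) (p : Fin 3 → ℝ) :
    (spatialSlashMulZero B p)ᵀ = spatialSlashMulZero B p := by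
  have hB0 : (B 0)ᵀ = -B 0 := neg_eq_iff_eq_neg.mp <| by
    simpa using smul_transpose_eq_of_mul_self (c := -1) (horth 0)
      (by rw [zero_mul_self_of_clifford hB, neg_one_smul])
  have hBk (k : Fin 3) : (B k.succ)ᵀ = B k.succ := by
    simpa using smul_transpose_eq_of_mul_self (c := 1) (horth k.succ)
      (by rw [succ_mul_self_of_clifford hB, one_smul])
  rw [spatialSlashMulZero, transpose_mul, transpose_sum]
  simp only [transpose_smul, hBk, hB0, Matrix.neg_mul]
  rw [mul_sum_smul_eq_neg_of_anticomm _ (zero_mul_succ_of_clifford hB) p, neg_neg]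

end Majorana

theorem majorana_fourier_multiplier_orthogonal_general
    (B : Fin 4 → Matrix (Fin 4) (Fin 4) ℝ)
    (horth : ∀ μ, (B μ)ᵀ * B μ = 1)
    (hB : ∀ μ ν, B μ * B ν + B ν * B μ =
      (-2 * minkowskiEta μ ν) • (1 : Matrix (Fin 4) (Fin 4) ℝ))
    (m : ℝ) (p : Fin 3 → ℝ) (hp : p ≠ 0)
    (E a b : ℝ) (G : Matrix (Fin 4) (Fin 4) ℝ)
    (hE : E = Real.sqrt ((∑ k, p k ^ 2) + m ^ 2))
    (ha : a = Real.sqrt ((E + m) / (2 * E)))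
    (hb : b = Real.sqrt ((E - m) / (2 * E)))
    (hG : G = (Real.sqrt (∑ k, p k ^ 2))⁻¹ • ((∑ k, p k • B k.succ) * B 0)) :
    (Matrix.fromBlocks (a • (1 : Matrix (Fin 4) (Fin 4) ℝ)) (-(b • G)) (b • G)
        (a • (1 : Matrix (Fin 4) (Fin 4) ℝ)))ᵀ *
      Matrix.fromBlocks (a • (1 : Matrix (Fin 4) (Fin 4) ℝ)) (-(b • G)) (b • G)
        (a • (1 : Matrix (Fin 4) (Fin 4) ℝ)) = 1 := by
  obtain ⟨k, hk⟩ := Function.ne_iff.mp hp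
  have hp2 : 0 < ∑ k, p k ^ 2 :=
    Finset.sum_pos' (fun i _ => sq_nonneg _) ⟨k, Finset.mem_univ k, pow_two_pos_of_ne_zero hk⟩
  have hE_pos : 0 < E := hE ▸ Real.sqrt_pos.mpr (by positivity)
  have hmE : |m| ≤ E := hE ▸ Real.abs_le_sqrt (by linarith)
  change G = _ • spatialSlashMulZero B p at hG
  have hGT : Gᵀ = G := by rw [hG, transpose_smul, transpose_spatialSlashMulZero hB horth]
  have hGG : G * G = 1 := by
    rw [hG, smul_mul_smul_comm, spatialSlashMulZero_mul_self hB, smul_smul, ← mul_inv,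
      ← sq, Real.sq_sqrt hp2.le, inv_mul_cancel₀ hp2.ne', one_smul]
  refine fromBlocks_rotation_orthogonal hGT hGG ?_
  rw [ha, hb]
  exact sqrt_add_div_sq_add_sqrt_sub_div_sq hE_pos hmE

/-- Given real orthogonal Majorana matrices `B_μ`, a mass `m ≥ 0` and a
nonzero momentum `p ∈ ℝ³`, with `E = √(|p|²+m²)`, `a = √((E+m)/(2E))`,
`b = √((E−m)/(2E))` and `G = |p|⁻¹ (Σ_k p_k B_k) B₀`, the 8×8 block matrix
`[[a·I, −b·G],[b·G, a·I]]` is orthogonal. -/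
theorem majorana_fourier_multiplier_orthogonal
    (B : Fin 4 → Matrix (Fin 4) (Fin 4) ℝ)
    (horth : ∀ μ, (B μ)ᵀ * B μ = 1)
    (hB : ∀ μ ν, B μ * B ν + B ν * B μ =
      (-2 * minkowskiEta μ ν) • (1 : Matrix (Fin 4) (Fin 4) ℝ))
    (m : ℝ) (hm : 0 ≤ m) (p : Fin 3 → ℝ) (hp : p ≠ 0)
    (E a b : ℝ) (G : Matrix (Fin 4) (Fin 4) ℝ)
    (hE : E = Real.sqrt ((∑ k, p k ^ 2) + m ^ 2))
    (ha : a = Real.sqrt ((E + m) / (2 * E)))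
    (hb : b = Real.sqrt ((E - m) / (2 * E)))
    (hG : G = (Real.sqrt (∑ k, p k ^ 2))⁻¹ • ((∑ k, p k • B k.succ) * B 0)) :
    (Matrix.fromBlocks (a • (1 : Matrix (Fin 4) (Fin 4) ℝ)) (-(b • G)) (b • G)
        (a • (1 : Matrix (Fin 4) (Fin 4) ℝ)))ᵀ *
      Matrix.fromBlocks (a • (1 : Matrix (Fin 4) (Fin 4) ℝ)) (-(b • G)) (b • G)
        (a • (1 : Matrix (Fin 4) (Fin 4) ℝ)) = 1 :=
  majorana_fourier_multiplier_orthogonal_general B horth hB m p hp E a b G hE ha hb hG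
end
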